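/- arXiv:1809.00136 — 5 statements merged into one kernel-verified Lean document; each statement's English description precedes it below -/
import Mathlib

section
/- Let G be a locally finite graph and x, y adjacent vertices. Then κ(x,y) ≥ −(1 − 1/d_x − 1/d_y − #(x,y)/(d_x ∧ d_y))_+ − (1 − 1/d_x − 1/d_y − #(x,y)/(d_x ∨ d_y))_+ + #(x,y)/(d_x ∨ d_y), where #(x,y) is the number of common neighbors of x and y (i.e., the number of triangles containing the edge (x,y)), s_+ = max(s,0), s ∨ t = max(s,t), s ∧ t = min(s,t). -/
open scoped Classical
noncomputable section

namespace OR

variable {V : Type*}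

/-- The degree of a vertex. -/
def deg (G : SimpleGraph V) (x : V) : ℕ := Nat.card (G.neighborSet x)

/-- The simple random walk measure at a vertex. -/
def rw (G : SimpleGraph V) (x : V) : V → ℝ :=
  fun v => if G.Adj x v then ((deg G x : ℝ))⁻¹ else 0

/-- A coupling between two measures on the vertex set. -/
def IsCoupling (μ ν : V → ℝ) (A : V → V → ℝ) : Prop :=
  (∀ u v, 0 ≤ A u v) ∧
  (Function.support fun p : V × V => A p.1 p.2).Finite ∧
  (∀ u, ∑ᶠ v, A u v = μ u) ∧ (∀ v, ∑ᶠ u, A u v = ν v)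

/-- The 1-Wasserstein distance w.r.t. the graph distance. -/
def W (G : SimpleGraph V) (μ ν : V → ℝ) : ℝ :=
  sInf { r | ∃ A, IsCoupling μ ν A ∧ r = ∑ᶠ u, ∑ᶠ v, A u v * (G.dist u v : ℝ) }

/-- The Ollivier–Ricci curvature. -/
def ricci (G : SimpleGraph V) (x y : V) : ℝ :=
  1 - W G (rw G x) (rw G y) / (G.dist x y : ℝ)

/-- The number of common neighbours of `x` and `y`. -/
def tri (G : SimpleGraph V) (x y : V) : ℕ := Nat.card {w | G.Adj x w ∧ G.Adj y w}


end OR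

namespace JLproof

open OR

variable {V : Type*}

/-- swap of a finitely supported double sum -/
lemma finsum_swap (f : V → V → ℝ)
    (h : (Function.support fun p : V × V => f p.1 p.2).Finite) :
    ∑ᶠ u, ∑ᶠ v, f u v = ∑ᶠ v, ∑ᶠ u, f u v := by
  classical
  set s := h.toFinset with hs
  set P : Finset V := s.image Prod.fst with hP
  set Q : Finset V := s.image Prod.snd with hQ
  have hmem : ∀ u v, f u v ≠ 0 → u ∈ P ∧ v ∈ Q := by
    intro u v hf
    have : (u, v) ∈ s := h.mem_toFinset.2 hf
    exact ⟨Finset.mem_image.2 ⟨(u, v), this, rfl⟩, Finset.mem_image.2 ⟨(u, v), this, rfl⟩⟩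
  have h1 : ∀ u, ∑ᶠ v, f u v = ∑ v ∈ Q, f u v := by
    intro u
    refine finsum_eq_sum_of_support_subset _ ?_
    intro v hv; exact (hmem u v hv).2
  have h2 : ∀ v, ∑ᶠ u, f u v = ∑ u ∈ P, f u v := by
    intro v
    refine finsum_eq_sum_of_support_subset _ ?_
    intro u hu; exact (hmem u v hu).1
  calc ∑ᶠ u, ∑ᶠ v, f u v = ∑ u ∈ P, ∑ v ∈ Q, f u v := by
        rw [show (fun u => ∑ᶠ v, f u v) = fun u => ∑ v ∈ Q, f u v from funext h1]
        refine finsum_eq_sum_of_support_subset _ ?_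
        intro u hu
        obtain ⟨v, hv, hfv⟩ := Finset.exists_ne_zero_of_sum_ne_zero hu
        exact (hmem u v hfv).1
    _ = ∑ v ∈ Q, ∑ u ∈ P, f u v := Finset.sum_comm
    _ = ∑ᶠ v, ∑ᶠ u, f u v := by
        rw [show (fun v => ∑ᶠ u, f u v) = fun v => ∑ u ∈ P, f u v from funext h2]
        refine (finsum_eq_sum_of_support_subset _ ?_).symm
        intro v hv
        obtain ⟨u, hu, hfu⟩ := Finset.exists_ne_zero_of_sum_ne_zero hv
        exact (hmem u v hfu).2

lemma W_symm (G : SimpleGraph V) (μ ν : V → ℝ) : W G μ ν = W G ν μ := by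
  have key : ∀ (μ ν : V → ℝ) (r : ℝ),
      r ∈ { r | ∃ A, IsCoupling μ ν A ∧ r = ∑ᶠ u, ∑ᶠ v, A u v * (G.dist u v : ℝ) } →
      r ∈ { r | ∃ A, IsCoupling ν μ A ∧ r = ∑ᶠ u, ∑ᶠ v, A u v * (G.dist u v : ℝ) } := by
    rintro μ ν r ⟨A, ⟨hpos, hfin, hrow, hcol⟩, rfl⟩
    refine ⟨fun u v => A v u, ⟨fun u v => hpos v u, ?_, hcol, hrow⟩, ?_⟩
    · have : (Function.support fun p : V × V => A p.2 p.1)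
          = Prod.swap ⁻¹' (Function.support fun p : V × V => A p.1 p.2) := rfl
      rw [this]
      exact hfin.preimage (Prod.swap_injective.injOn)
    · have hfin' : (Function.support fun p : V × V => A p.2 p.1 * (G.dist p.1 p.2 : ℝ)).Finite := by
        refine Set.Finite.subset (hfin.preimage (Prod.swap_injective.injOn)) ?_
        intro p hp
        simp only [Function.mem_support] at hp ⊢
        intro h0
        exact hp (by simp [Set.mem_preimage, Function.mem_support] at h0 ⊢; simp_all)
      calc ∑ᶠ u, ∑ᶠ v, A u v * (G.dist u v : ℝ)
          = ∑ᶠ v, ∑ᶠ u, A u v * (G.dist u v : ℝ) := by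
            refine finsum_swap _ ?_
            refine Set.Finite.subset hfin ?_
            intro p hp
            simp only [Function.mem_support] at hp ⊢
            intro h0; exact hp (by rw [h0, zero_mul])
        _ = ∑ᶠ u, ∑ᶠ v, A v u * (G.dist u v : ℝ) := by
            congr 1; funext v; congr 1; funext u; rw [SimpleGraph.dist_comm]
  unfold W
  exact congrArg sInf (Set.Subset.antisymm (fun r hr => key μ ν r hr) (fun r hr => key ν μ r hr))

lemma tri_symm (G : SimpleGraph V) (x y : V) : tri G y x = tri G x y := by
  have hset : {w | G.Adj y w ∧ G.Adj x w} = {w | G.Adj x w ∧ G.Adj y w} :=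
    Set.ext fun w => and_comm
  rw [tri, tri, hset]

lemma W_le_main (G : SimpleGraph V) (hlf : ∀ v : V, (G.neighborSet v).Finite)
    (x y : V) (hxy : G.Adj x y) (hd : deg G y ≤ deg G x) :
    W G (rw G x) (rw G y)
      ≤ 1 - (tri G x y : ℝ) * ((deg G x : ℝ))⁻¹
        + max (1 - ((deg G x : ℝ))⁻¹ - ((deg G y : ℝ))⁻¹
            - (tri G x y : ℝ) * ((deg G y : ℝ))⁻¹) 0
        + max (1 - ((deg G x : ℝ))⁻¹ - ((deg G y : ℝ))⁻¹
            - (tri G x y : ℝ) * ((deg G x : ℝ))⁻¹) 0 := by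
  classical
  set NxF := (hlf x).toFinset with hNxFd
  set NyF := (hlf y).toFinset with hNyFd
  have hmemNx : ∀ u, u ∈ NxF ↔ G.Adj x u := fun u => by
    rw [hNxFd, Set.Finite.mem_toFinset]; exact Iff.rfl
  have hmemNy : ∀ u, u ∈ NyF ↔ G.Adj y u := fun u => by
    rw [hNyFd, Set.Finite.mem_toFinset]; exact Iff.rfl
  set S1 : Finset V := NxF.filter (fun u => ¬ G.Adj y u ∧ u ≠ y) with hS1d
  set S0 : Finset V := NxF.filter (fun u => G.Adj y u) with hS0d
  set S2 : Finset V := NyF.filter (fun u => ¬ G.Adj x u ∧ u ≠ x) with hS2d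
  have hS1mem : ∀ u, u ∈ S1 ↔ G.Adj x u ∧ ¬ G.Adj y u ∧ u ≠ y := fun u => by
    rw [hS1d, Finset.mem_filter, hmemNx]
  have hS0mem : ∀ u, u ∈ S0 ↔ G.Adj x u ∧ G.Adj y u := fun u => by
    rw [hS0d, Finset.mem_filter, hmemNx]
  have hS2mem : ∀ u, u ∈ S2 ↔ G.Adj y u ∧ ¬ G.Adj x u ∧ u ≠ x := fun u => by
    rw [hS2d, Finset.mem_filter, hmemNy]
  set n1 := S1.card with hn1d
  set t := S0.card with htd
  set n2 := S2.card with hn2d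
  have hdegx : deg G x = NxF.card := by
    rw [deg, Nat.card_coe_set_eq, Set.ncard_eq_toFinset_card _ (hlf x)]
  have hdegy : deg G y = NyF.card := by
    rw [deg, Nat.card_coe_set_eq, Set.ncard_eq_toFinset_card _ (hlf y)]
  have htri : tri G x y = t := by
    rw [tri, Nat.card_coe_set_eq]
    have hset : {w | G.Adj x w ∧ G.Adj y w} = (S0 : Set V) := by
      ext w; rw [Finset.mem_coe, hS0mem]; exact Iff.rfl
    rw [hset, Set.ncard_coe_finset]
  -- partitions
  have hynot1 : y ∉ S1 := fun h => ((hS1mem y).1 h).2.2 rfl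
  have hynot0 : y ∉ S0 := fun h => G.irrefl ((hS0mem y).1 h).2
  have hynot : y ∉ S1 ∪ S0 := by
    rw [Finset.mem_union]; rintro (h | h); exacts [hynot1 h, hynot0 h]
  have hxnot0 : x ∉ S0 := fun h => G.irrefl ((hS0mem x).1 h).1
  have hxnot2 : x ∉ S2 := fun h => ((hS2mem x).1 h).2.2 rfl
  have hxnot : x ∉ S0 ∪ S2 := by
    rw [Finset.mem_union]; rintro (h | h); exacts [hxnot0 h, hxnot2 h]
  have hd10 : Disjoint S1 S0 := by
    rw [Finset.disjoint_left]
    intro u h1 h0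
    exact ((hS1mem u).1 h1).2.1 ((hS0mem u).1 h0).2
  have hd02 : Disjoint S0 S2 := by
    rw [Finset.disjoint_left]
    intro u h0 h2
    exact ((hS2mem u).1 h2).2.1 ((hS0mem u).1 h0).1
  have hxpart : NxF = insert y (S1 ∪ S0) := by
    ext u
    rw [Finset.mem_insert, Finset.mem_union, hS1mem, hS0mem, hmemNx]
    constructor
    · intro h
      by_cases hu : u = y
      · exact Or.inl hu
      · by_cases h2 : G.Adj y u
        · exact Or.inr (Or.inr ⟨h, h2⟩)
        · exact Or.inr (Or.inl ⟨h, h2, hu⟩)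
    · rintro (rfl | ⟨h, _⟩ | ⟨h, _⟩) <;> first | exact hxy | exact h
  have hypart : NyF = insert x (S0 ∪ S2) := by
    ext u
    rw [Finset.mem_insert, Finset.mem_union, hS0mem, hS2mem, hmemNy]
    constructor
    · intro h
      by_cases hu : u = x
      · exact Or.inl hu
      · by_cases h2 : G.Adj x u
        · exact Or.inr (Or.inl ⟨h2, h⟩)
        · exact Or.inr (Or.inr ⟨h, h2, hu⟩)
    · rintro (rfl | ⟨_, h⟩ | ⟨h, _⟩) <;> first | exact hxy.symm | exact h
  have hdxcard : deg G x = n1 + t + 1 := by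
    rw [hdegx, hxpart, Finset.card_insert_of_notMem hynot,
      Finset.card_union_of_disjoint hd10, ← hn1d, ← htd]
  have hdycard : deg G y = t + n2 + 1 := by
    rw [hdegy, hypart, Finset.card_insert_of_notMem hxnot,
      Finset.card_union_of_disjoint hd02, ← htd, ← hn2d]
  -- real numbers
  set a : ℝ := ((deg G x : ℝ))⁻¹ with had
  set b : ℝ := ((deg G y : ℝ))⁻¹ with hbd
  have hdx0 : 0 < deg G x := by omega
  have hdy0 : 0 < deg G y := by omega
  have hdxR : (0:ℝ) < (deg G x : ℝ) := by exact_mod_cast hdx0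
  have hdyR : (0:ℝ) < (deg G y : ℝ) := by exact_mod_cast hdy0
  have ha : 0 < a := by rw [had]; exact inv_pos.2 hdxR
  have hb : 0 < b := by rw [hbd]; exact inv_pos.2 hdyR
  have hab : a ≤ b := by
    rw [had, hbd]
    exact inv_anti₀ hdyR (by exact_mod_cast hd)
  have hxa : ((deg G x : ℝ)) * a = 1 := by rw [had]; exact mul_inv_cancel₀ hdxR.ne'
  have hyb : ((deg G y : ℝ)) * b = 1 := by rw [hbd]; exact mul_inv_cancel₀ hdyR.ne'
  have hcastx : ((deg G x : ℝ)) = (n1 : ℝ) + t + 1 := by rw [hdxcard]; push_cast; ring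
  have hcasty : ((deg G y : ℝ)) = (t : ℝ) + n2 + 1 := by rw [hdycard]; push_cast; ring
  have hxa' : ((n1 : ℝ) + t + 1) * a = 1 := by rw [← hcastx]; exact hxa
  have hyb' : ((t : ℝ) + n2 + 1) * b = 1 := by rw [← hcasty]; exact hyb
  set S : ℝ := n1 * a with hSd
  set D0 : ℝ := t * (b - a) with hD0d
  set D2 : ℝ := n2 * b with hD2d
  set m1 : ℝ := min S b with hm1d
  set m2 : ℝ := min (max (S - b) 0) D0 with hm2d
  set m3 : ℝ := max (S - b - D0) 0 with hm3d
  set g1 : ℝ := b - m1 with hg1d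
  set g2 : ℝ := D0 - m2 with hg2d
  set g3 : ℝ := D2 - m3 with hg3d
  have hSnn : 0 ≤ S := by rw [hSd]; exact mul_nonneg (Nat.cast_nonneg _) ha.le
  have hD0nn : 0 ≤ D0 := by
    rw [hD0d]; exact mul_nonneg (Nat.cast_nonneg _) (sub_nonneg.2 hab)
  have hD2nn : 0 ≤ D2 := by rw [hD2d]; exact mul_nonneg (Nat.cast_nonneg _) hb.le
  have hbal : S + a = b + D0 + D2 := by
    rw [hSd, hD0d, hD2d]; linear_combination hxa' - hyb'
  have hm1 : 0 ≤ m1 := le_min hSnn hb.le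
  have hm2 : 0 ≤ m2 := le_min (le_max_right _ _) hD0nn
  have hm3 : 0 ≤ m3 := le_max_right _ _
  have hg1 : 0 ≤ g1 := sub_nonneg.2 (min_le_right _ _)
  have hg2 : 0 ≤ g2 := sub_nonneg.2 (min_le_right _ _)
  have hg3 : 0 ≤ g3 := by
    rw [hg3d]
    refine sub_nonneg.2 (max_le (by linarith) hD2nn)
  have hkeys : m1 + m2 + m3 = S ∧
      m1 + 2*m2 + 3*m3 = S + max (S - b - D0) 0 + max (S - b) 0 := by
    rcases le_total S b with h1 | h1
    · have e1 : m1 = S := min_eq_left h1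
      have eP2 : max (S - b) 0 = 0 := max_eq_right (by linarith)
      have e2 : m2 = 0 := by rw [hm2d, eP2]; exact min_eq_left hD0nn
      have eP1 : max (S - b - D0) 0 = 0 := max_eq_right (by linarith)
      have e3 : m3 = 0 := eP1
      constructor <;> linarith
    · have e1 : m1 = b := min_eq_right h1
      have eP2 : max (S - b) 0 = S - b := max_eq_left (by linarith)
      rcases le_total (S - b) D0 with h2 | h2
      · have e2 : m2 = S - b := by rw [hm2d, eP2]; exact min_eq_left h2
        have eP1 : max (S - b - D0) 0 = 0 := max_eq_right (by linarith)
        have e3 : m3 = 0 := eP1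
        constructor <;> linarith
      · have e2 : m2 = D0 := by rw [hm2d, eP2]; exact min_eq_right h2
        have eP1 : max (S - b - D0) 0 = S - b - D0 := max_eq_left (by linarith)
        have e3 : m3 = S - b - D0 := eP1
        constructor <;> linarith
  have hmsum := hkeys.1
  have hMkey := hkeys.2
  have hgsum : g1 + g2 + g3 = a := by rw [hg1d, hg2d, hg3d]; linarith
  have ht0 : t = 0 → m2 = 0 ∧ g2 = 0 := by
    intro h
    have hD0z : D0 = 0 := by rw [hD0d, h]; push_cast; ring
    have hm2z : m2 = 0 :=
      le_antisymm (by rw [hm2d]; exact (min_le_right _ _).trans hD0z.le) hm2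
    exact ⟨hm2z, by rw [hg2d, hm2z, hD0z]; ring⟩
  have hn2z : n2 = 0 → m3 = 0 ∧ g3 = 0 := by
    intro h
    have hD2z : D2 = 0 := by rw [hD2d, h]; push_cast; ring
    have hm3z : m3 = 0 :=
      le_antisymm (by rw [hm3d]; exact max_le (by linarith) le_rfl) hm3
    exact ⟨hm3z, by rw [hg3d, hm3z, hD2z]; ring⟩
  have hn1z : n1 = 0 → m1 = 0 ∧ m2 = 0 ∧ m3 = 0 := by
    intro h
    have hSz : S = 0 := by rw [hSd, h]; push_cast; ring
    refine ⟨le_antisymm (by rw [hm1d]; exact (min_le_left _ _).trans hSz.le) hm1, ?_, ?_⟩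
    · exact le_antisymm
        (by rw [hm2d]; exact (min_le_left _ _).trans (max_le (by linarith) le_rfl)) hm2
    · exact le_antisymm (by rw [hm3d]; exact max_le (by linarith) le_rfl) hm3
  -- the coupling
  set col : V → ℝ := fun v =>
    if v = x then m1 else if v ∈ S0 then m2 / t else if v ∈ S2 then m3 / n2 else 0 with hcold
  set colY : V → ℝ := fun v =>
    if v = x then g1 else if v ∈ S0 then g2 / t else if v ∈ S2 then g3 / n2 else 0 with hcolYd
  set A : V → V → ℝ := fun u v =>
    (if u = y then colY v else if u ∈ S1 then col v / n1 else 0) +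
    (if u ∈ S0 ∧ v = u then a else 0) with hAd
  have hcoleval : ∀ v, col v =
      if v = x then m1 else if v ∈ S0 then m2 / t else if v ∈ S2 then m3 / n2 else 0 :=
    fun v => by rw [hcold]
  have hcolYeval : ∀ v, colY v =
      if v = x then g1 else if v ∈ S0 then g2 / t else if v ∈ S2 then g3 / n2 else 0 :=
    fun v => by rw [hcolYd]
  have hAeval : ∀ u v, A u v =
      (if u = y then colY v else if u ∈ S1 then col v / n1 else 0) +
      (if u ∈ S0 ∧ v = u then a else 0) := fun u v => by rw [hAd]
  have hcolnn : ∀ v, 0 ≤ col v := by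
    intro v; rw [hcoleval]
    split_ifs
    · exact hm1
    · exact div_nonneg hm2 (Nat.cast_nonneg _)
    · exact div_nonneg hm3 (Nat.cast_nonneg _)
    · exact le_rfl
  have hcolYnn : ∀ v, 0 ≤ colY v := by
    intro v; rw [hcolYeval]
    split_ifs
    · exact hg1
    · exact div_nonneg hg2 (Nat.cast_nonneg _)
    · exact div_nonneg hg3 (Nat.cast_nonneg _)
    · exact le_rfl
  have hAnn : ∀ u v, 0 ≤ A u v := by
    intro u v; rw [hAeval]
    refine add_nonneg ?_ ?_
    · split_ifs
      · exact hcolYnn v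
      · exact div_nonneg (hcolnn v) (Nat.cast_nonneg _)
      · exact le_rfl
    · split_ifs
      · exact ha.le
      · exact le_rfl
  have hcolzero : ∀ v, v ∉ NyF → col v = 0 ∧ colY v = 0 := by
    intro v hv
    have hvx : v ≠ x := fun h => hv (by rw [h]; exact (hmemNy x).2 hxy.symm)
    have hv0 : v ∉ S0 := fun h => hv ((hmemNy v).2 ((hS0mem v).1 h).2)
    have hv2 : v ∉ S2 := fun h => hv ((hmemNy v).2 ((hS2mem v).1 h).1)
    rw [hcoleval, hcolYeval, if_neg hvx, if_neg hv0, if_neg hv2,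
      if_neg hvx, if_neg hv0, if_neg hv2]
    exact ⟨rfl, rfl⟩
  have hcoln1 : n1 = 0 → ∀ v, col v = 0 := by
    intro h v
    obtain ⟨z1, z2, z3⟩ := hn1z h
    rw [hcoleval, z1, z2, z3]
    split_ifs <;> simp
  -- A u v ≠ 0 constraints
  have hAx : ∀ u v, A u v ≠ 0 → u ∈ NxF := by
    intro u v hA
    by_contra h1
    apply hA
    have h1y : u ≠ y := fun h => h1 (by rw [h]; exact (hmemNx y).2 hxy)
    have h11 : u ∉ S1 := fun h => h1 ((hmemNx u).2 ((hS1mem u).1 h).1)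
    have h10 : u ∉ S0 := fun h => h1 ((hmemNx u).2 ((hS0mem u).1 h).1)
    rw [hAeval, if_neg h1y, if_neg h11, if_neg (fun hc : u ∈ S0 ∧ v = u => h10 hc.1)]
    ring
  have hAy : ∀ u v, A u v ≠ 0 → v ∈ NyF := by
    intro u v hA
    by_contra h2
    apply hA
    obtain ⟨hc, hcY⟩ := hcolzero v h2
    have hpc : ¬ (u ∈ S0 ∧ v = u) := by
      rintro ⟨h0, rfl⟩
      exact h2 ((hmemNy v).2 ((hS0mem v).1 h0).2)
    rw [hAeval, if_neg hpc, add_zero]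
    split_ifs
    · exact hcY
    · rw [hc]; ring
    · rfl
  -- column sums of col / colY over NyF
  have hsum_gen : ∀ (p q r : ℝ), ((t:ℝ) = 0 → q = 0) → ((n2:ℝ) = 0 → r = 0) →
      ∑ v ∈ NyF, (if v = x then p else if v ∈ S0 then q / t else if v ∈ S2 then r / n2 else 0)
        = p + q + r := by
    intro p q r hq hr
    rw [hypart, Finset.sum_insert hxnot, Finset.sum_union hd02]
    have e0 : ∑ v ∈ S0, (if v = x then p else if v ∈ S0 then q / t
        else if v ∈ S2 then r / n2 else 0) = q := by
      have hcg : ∀ v ∈ S0, (if v = x then p else if v ∈ S0 then q / t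
          else if v ∈ S2 then r / n2 else 0) = q / t := by
        intro v hv
        have hvx : v ≠ x := fun h => hxnot0 (h ▸ hv)
        rw [if_neg hvx, if_pos hv]
      rw [Finset.sum_congr rfl hcg, Finset.sum_const, nsmul_eq_mul, ← htd]
      rcases Nat.eq_zero_or_pos t with h | h
      · rw [hq (by exact_mod_cast h)]; simp
      · have : (t:ℝ) ≠ 0 := Nat.cast_ne_zero.2 h.ne'
        field_simp
    have e2 : ∑ v ∈ S2, (if v = x then p else if v ∈ S0 then q / t
        else if v ∈ S2 then r / n2 else 0) = r := by
      have hcg : ∀ v ∈ S2, (if v = x then p else if v ∈ S0 then q / t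
          else if v ∈ S2 then r / n2 else 0) = r / n2 := by
        intro v hv
        have hvx : v ≠ x := fun h => hxnot2 (h ▸ hv)
        have hv0 : v ∉ S0 := fun h => Finset.disjoint_left.1 hd02 h hv
        rw [if_neg hvx, if_neg hv0, if_pos hv]
      rw [Finset.sum_congr rfl hcg, Finset.sum_const, nsmul_eq_mul, ← hn2d]
      rcases Nat.eq_zero_or_pos n2 with h | h
      · rw [hr (by exact_mod_cast h)]; simp
      · have : (n2:ℝ) ≠ 0 := Nat.cast_ne_zero.2 h.ne'
        field_simp
    rw [e0, e2, if_pos rfl]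
    ring
  have hsumcol : ∑ v ∈ NyF, col v = m1 + m2 + m3 := by
    have := hsum_gen m1 m2 m3
      (fun h => ((ht0 (by exact_mod_cast h)).1))
      (fun h => ((hn2z (by exact_mod_cast h)).1))
    rw [← this]
  have hsumcolY : ∑ v ∈ NyF, colY v = g1 + g2 + g3 := by
    have := hsum_gen g1 g2 g3
      (fun h => ((ht0 (by exact_mod_cast h)).2))
      (fun h => ((hn2z (by exact_mod_cast h)).2))
    rw [← this]
  -- row marginals
  have hrow : ∀ u, ∑ᶠ v, A u v = rw G x u := by
    intro u
    have hsupp : (Function.support fun v => A u v) ⊆ ↑NyF := by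
      intro v hv
      exact hAy u v hv
    rw [finsum_eq_sum_of_support_subset _ hsupp]
    have hrwx : rw G x u = if G.Adj x u then a else 0 := by rw [had]; rfl
    by_cases huy : u = y
    · subst huy
      have hcg : ∀ v ∈ NyF, A u v = colY v := by
        intro v hv
        rw [hAeval, if_pos rfl, if_neg (fun hc : u ∈ S0 ∧ v = u => hynot0 hc.1), add_zero]
      rw [Finset.sum_congr rfl hcg, hsumcolY, hrwx, if_pos hxy]
      linarith
    · by_cases hu1 : u ∈ S1
      · have hn1pos : 0 < n1 := by rw [hn1d]; exact Finset.card_pos.2 ⟨u, hu1⟩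
        have hn1R : (n1:ℝ) ≠ 0 := Nat.cast_ne_zero.2 hn1pos.ne'
        have hu0 : u ∉ S0 := fun h => Finset.disjoint_left.1 hd10 hu1 h
        have hcg : ∀ v ∈ NyF, A u v = col v / n1 := by
          intro v hv
          rw [hAeval, if_neg huy, if_pos hu1,
            if_neg (fun hc : u ∈ S0 ∧ v = u => hu0 hc.1), add_zero]
        rw [Finset.sum_congr rfl hcg, ← Finset.sum_div, hsumcol, hmsum, hSd, hrwx,
          if_pos ((hS1mem u).1 hu1).1]
        field_simp
      · by_cases hu0 : u ∈ S0
        · have hcg : ∀ v ∈ NyF, A u v = if v = u then a else 0 := by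
            intro v hv
            rw [hAeval, if_neg huy, if_neg hu1, zero_add]
            by_cases hvu : v = u
            · rw [if_pos ⟨hu0, hvu⟩, if_pos hvu]
            · rw [if_neg (fun hc : u ∈ S0 ∧ v = u => hvu hc.2), if_neg hvu]
          rw [Finset.sum_congr rfl hcg, Finset.sum_ite_eq' NyF u (fun _ => a),
            if_pos ((hmemNy u).2 ((hS0mem u).1 hu0).2), hrwx, if_pos ((hS0mem u).1 hu0).1]
        · have hcg : ∀ v ∈ NyF, A u v = 0 := by
            intro v hv
            rw [hAeval, if_neg huy, if_neg hu1,
              if_neg (fun hc : u ∈ S0 ∧ v = u => hu0 hc.1)]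
            ring
          rw [Finset.sum_congr rfl hcg, Finset.sum_const_zero, hrwx]
          have : ¬ G.Adj x u := by
            intro h
            have : u ∈ NxF := (hmemNx u).2 h
            rw [hxpart, Finset.mem_insert, Finset.mem_union] at this
            rcases this with h' | h' | h'
            exacts [huy h', hu1 h', hu0 h']
          rw [if_neg this]
  -- column marginals
  have hcolm : ∀ v, ∑ᶠ u, A u v = rw G y v := by
    intro v
    have hsupp : (Function.support fun u => A u v) ⊆ ↑NxF := by
      intro u hu
      exact hAx u v hu
    rw [finsum_eq_sum_of_support_subset _ hsupp]
    have hrwy : rw G y v = if G.Adj y v then b else 0 := by rw [hbd]; rfl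
    rw [hxpart, Finset.sum_insert hynot, Finset.sum_union hd10]
    have hAyv : A y v = colY v := by
      rw [hAeval, if_pos rfl, if_neg (fun hc : y ∈ S0 ∧ v = y => hynot0 hc.1), add_zero]
    have h1 : ∑ u ∈ S1, A u v = col v := by
      have hcg : ∀ u ∈ S1, A u v = col v / n1 := by
        intro u hu
        have huy : u ≠ y := ((hS1mem u).1 hu).2.2
        have hu0 : u ∉ S0 := fun h => Finset.disjoint_left.1 hd10 hu h
        rw [hAeval, if_neg huy, if_pos hu,
          if_neg (fun hc : u ∈ S0 ∧ v = u => hu0 hc.1), add_zero]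
      rw [Finset.sum_congr rfl hcg, Finset.sum_const, nsmul_eq_mul, ← hn1d]
      rcases Nat.eq_zero_or_pos n1 with h | h
      · rw [hcoln1 h v]; simp
      · have : (n1:ℝ) ≠ 0 := Nat.cast_ne_zero.2 h.ne'
        field_simp
    have h0 : ∑ u ∈ S0, A u v = if v ∈ S0 then a else 0 := by
      have hcg : ∀ u ∈ S0, A u v = if v = u then a else 0 := by
        intro u hu
        have huy : u ≠ y := fun h => hynot0 (h ▸ hu)
        have hu1 : u ∉ S1 := fun h => Finset.disjoint_left.1 hd10 h hu
        rw [hAeval, if_neg huy, if_neg hu1, zero_add]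
        by_cases hvu : v = u
        · rw [if_pos ⟨hu, hvu⟩, if_pos hvu]
        · rw [if_neg (fun hc : u ∈ S0 ∧ v = u => hvu hc.2), if_neg hvu]
      rw [Finset.sum_congr rfl hcg, Finset.sum_ite_eq S0 v (fun _ => a)]
    rw [hAyv, h1, h0]
    by_cases hvx : v = x
    · subst hvx
      rw [hcoleval, hcolYeval, if_pos rfl, if_pos rfl, if_neg hxnot0, hrwy,
        if_pos hxy.symm, hg1d]
      ring
    · by_cases hv0 : v ∈ S0
      · have htpos : 0 < t := by rw [htd]; exact Finset.card_pos.2 ⟨v, hv0⟩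
        have htR : (t:ℝ) ≠ 0 := Nat.cast_ne_zero.2 htpos.ne'
        rw [hcoleval, hcolYeval, if_neg hvx, if_pos hv0, if_neg hvx, if_pos hv0, if_pos hv0,
          hrwy, if_pos ((hS0mem v).1 hv0).2, hg2d, hD0d]
        field_simp
        ring
      · by_cases hv2 : v ∈ S2
        · have hn2pos : 0 < n2 := by rw [hn2d]; exact Finset.card_pos.2 ⟨v, hv2⟩
          have hn2R : (n2:ℝ) ≠ 0 := Nat.cast_ne_zero.2 hn2pos.ne'
          rw [hcoleval, hcolYeval, if_neg hvx, if_neg hv0, if_pos hv2, if_neg hvx,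
            if_neg hv0, if_pos hv2, if_neg hv0, hrwy, if_pos ((hS2mem v).1 hv2).1,
            hg3d, hD2d]
          field_simp
          ring
        · rw [hcoleval, hcolYeval, if_neg hvx, if_neg hv0, if_neg hv2, if_neg hvx,
            if_neg hv0, if_neg hv2, if_neg hv0, hrwy]
          have : ¬ G.Adj y v := by
            intro h
            have : v ∈ NyF := (hmemNy v).2 h
            rw [hypart, Finset.mem_insert, Finset.mem_union] at this
            rcases this with h' | h' | h'
            exacts [hvx h', hv0 h', hv2 h']
          rw [if_neg this]
          ring
  -- finiteness of support
  have hfin : (Function.support fun p : V × V => A p.1 p.2).Finite := by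
    apply Set.Finite.subset ((NxF ×ˢ NyF).finite_toSet)
    intro p hp
    rw [Function.mem_support] at hp
    rw [Finset.coe_product, Set.mem_prod]
    exact ⟨hAx p.1 p.2 hp, hAy p.1 p.2 hp⟩
  -- W bounded by the cost of A
  have hWle : W G (rw G x) (rw G y) ≤ ∑ᶠ u, ∑ᶠ v, A u v * (G.dist u v : ℝ) := by
    apply csInf_le
    · refine ⟨0, ?_⟩
      rintro r ⟨B, hB, rfl⟩
      exact finsum_nonneg fun u => finsum_nonneg fun v =>
        mul_nonneg (hB.1 u v) (Nat.cast_nonneg _)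
    · exact ⟨A, ⟨hAnn, hfin, hrow, hcolm⟩, rfl⟩
  -- evaluate the cost
  have hinner : ∀ u, ∑ᶠ v, A u v * (G.dist u v : ℝ)
      = ∑ v ∈ NyF, A u v * (G.dist u v : ℝ) := by
    intro u
    apply finsum_eq_sum_of_support_subset
    intro v hv
    rw [Function.mem_support] at hv
    exact hAy u v fun h => hv (by rw [h, zero_mul])
  have houter : ∑ᶠ u, ∑ᶠ v, A u v * (G.dist u v : ℝ)
      = ∑ u ∈ NxF, ∑ v ∈ NyF, A u v * (G.dist u v : ℝ) := by
    rw [show (fun u => ∑ᶠ v, A u v * (G.dist u v : ℝ))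
      = fun u => ∑ v ∈ NyF, A u v * (G.dist u v : ℝ) from funext hinner]
    apply finsum_eq_sum_of_support_subset
    intro u hu
    rw [Function.mem_support] at hu
    obtain ⟨v, hv, hne⟩ := Finset.exists_ne_zero_of_sum_ne_zero hu
    exact hAx u v fun h => hne (by rw [h, zero_mul])
  -- the cost bound
  have hcost : ∑ u ∈ NxF, ∑ v ∈ NyF, A u v * (G.dist u v : ℝ)
      ≤ a + (m1 + 2*m2 + 3*m3) := by
    rw [hxpart, Finset.sum_insert hynot, Finset.sum_union hd10]
    have hTy : ∑ v ∈ NyF, A y v * (G.dist y v : ℝ) = a := by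
      have hcg : ∀ v ∈ NyF, A y v * (G.dist y v : ℝ) = A y v := by
        intro v hv
        have : G.dist y v = 1 := SimpleGraph.dist_eq_one_iff_adj.2 ((hmemNy v).1 hv)
        rw [this]; push_cast; ring
      rw [Finset.sum_congr rfl hcg]
      have hcg2 : ∀ v ∈ NyF, A y v = colY v := by
        intro v hv
        rw [hAeval, if_pos rfl, if_neg (fun hc : y ∈ S0 ∧ v = y => hynot0 hc.1), add_zero]
      rw [Finset.sum_congr rfl hcg2, hsumcolY, hgsum]
    have hT0 : ∑ u ∈ S0, ∑ v ∈ NyF, A u v * (G.dist u v : ℝ) = 0 := by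
      apply Finset.sum_eq_zero
      intro u hu
      apply Finset.sum_eq_zero
      intro v hv
      have huy : u ≠ y := fun h => hynot0 (h ▸ hu)
      have hu1 : u ∉ S1 := fun h => Finset.disjoint_left.1 hd10 h hu
      rw [hAeval, if_neg huy, if_neg hu1, zero_add]
      by_cases hvu : v = u
      · subst hvu
        rw [SimpleGraph.dist_self]
        push_cast; ring
      · rw [if_neg (fun hc : u ∈ S0 ∧ v = u => hvu hc.2)]
        ring
    have hMnn : 0 ≤ m1 + 2*m2 + 3*m3 := by linarith
    have hT1 : ∑ u ∈ S1, ∑ v ∈ NyF, A u v * (G.dist u v : ℝ)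
        ≤ m1 + 2*m2 + 3*m3 := by
      have hsumc : ∑ v ∈ NyF,
          col v * (if v = x then (1:ℝ) else if v ∈ S0 then 2 else 3)
          = m1 + 2*m2 + 3*m3 := by
        have := hsum_gen m1 (2*m2) (3*m3)
          (fun h => by rw [(ht0 (by exact_mod_cast h)).1]; ring)
          (fun h => by rw [(hn2z (by exact_mod_cast h)).1]; ring)
        rw [← this]
        apply Finset.sum_congr rfl
        intro v hv
        rw [hcoleval]
        by_cases h1 : v = x
        · rw [if_pos h1, if_pos h1, if_pos h1]; ring
        · rw [if_neg h1, if_neg h1, if_neg h1]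
          by_cases h2 : v ∈ S0
          · rw [if_pos h2, if_pos h2, if_pos h2]; ring
          · rw [if_neg h2, if_neg h2, if_neg h2]
            by_cases h3 : v ∈ S2
            · rw [if_pos h3, if_pos h3]; ring
            · rw [if_neg h3, if_neg h3]; ring
      rcases Nat.eq_zero_or_pos n1 with h | hn1pos
      · have hS1empty : S1 = ∅ := Finset.card_eq_zero.1 (by rw [← hn1d]; exact h)
        rw [hS1empty, Finset.sum_empty]
        exact hMnn
      · have hn1R : (n1:ℝ) ≠ 0 := Nat.cast_ne_zero.2 hn1pos.ne'
        have hper : ∀ u ∈ S1, ∑ v ∈ NyF, A u v * (G.dist u v : ℝ)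
            ≤ (m1 + 2*m2 + 3*m3) / n1 := by
          intro u hu
          obtain ⟨hxu, hyu, huy⟩ := (hS1mem u).1 hu
          have hu0 : u ∉ S0 := fun h => Finset.disjoint_left.1 hd10 hu h
          have hcg : ∀ v ∈ NyF, A u v = col v / n1 := by
            intro v hv
            rw [hAeval, if_neg huy, if_pos hu,
              if_neg (fun hc : u ∈ S0 ∧ v = u => hu0 hc.1), add_zero]
          calc ∑ v ∈ NyF, A u v * (G.dist u v : ℝ)
              ≤ ∑ v ∈ NyF, (col v / n1) *
                  (if v = x then (1:ℝ) else if v ∈ S0 then 2 else 3) := by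
                apply Finset.sum_le_sum
                intro v hv
                rw [hcg v hv]
                apply mul_le_mul_of_nonneg_left ?_
                  (div_nonneg (hcolnn v) (Nat.cast_nonneg _))
                split_ifs with h1 h2
                · have : G.dist u v ≤ 1 := by
                    rw [h1]
                    exact le_of_eq (SimpleGraph.dist_eq_one_iff_adj.2 hxu.symm)
                  exact_mod_cast this
                · have : G.dist u v ≤ 2 := by
                    simpa using SimpleGraph.dist_le
                      (SimpleGraph.Walk.cons hxu.symm
                        (SimpleGraph.Walk.cons ((hS0mem v).1 h2).1 SimpleGraph.Walk.nil))
                  exact_mod_cast this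
                · have : G.dist u v ≤ 3 := by
                    simpa using SimpleGraph.dist_le
                      (SimpleGraph.Walk.cons hxu.symm
                        (SimpleGraph.Walk.cons hxy
                          (SimpleGraph.Walk.cons ((hmemNy v).1 hv) SimpleGraph.Walk.nil)))
                  exact_mod_cast this
            _ = (m1 + 2*m2 + 3*m3) / n1 := by
                rw [← hsumc, Finset.sum_div]
                apply Finset.sum_congr rfl
                intro v hv
                ring
        calc ∑ u ∈ S1, ∑ v ∈ NyF, A u v * (G.dist u v : ℝ)
            ≤ ∑ u ∈ S1, (m1 + 2*m2 + 3*m3) / n1 := Finset.sum_le_sum hper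
          _ = m1 + 2*m2 + 3*m3 := by
              rw [Finset.sum_const, nsmul_eq_mul, ← hn1d]
              field_simp
    linarith
  -- final arithmetic
  have e1 : S - b - D0 = 1 - a - b - (t:ℝ)*b := by
    rw [hSd, hD0d]; linear_combination hxa'
  have e2 : S - b = 1 - a - b - (t:ℝ)*a := by
    rw [hSd]; linear_combination hxa'
  have hfinal : a + (m1 + 2*m2 + 3*m3)
      = 1 - (t:ℝ)*a + max (1 - a - b - (t:ℝ)*b) 0 + max (1 - a - b - (t:ℝ)*a) 0 := by
    rw [hMkey, e1, e2, hSd]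
    linear_combination hxa'
  rw [htri]
  rw [houter] at hWle
  calc W G (rw G x) (rw G y)
      ≤ ∑ u ∈ NxF, ∑ v ∈ NyF, A u v * (G.dist u v : ℝ) := hWle
    _ ≤ a + (m1 + 2*m2 + 3*m3) := hcost
    _ = 1 - (t:ℝ)*a + max (1 - a - b - (t:ℝ)*b) 0 + max (1 - a - b - (t:ℝ)*a) 0 := hfinal

end JLproof

theorem jost_liu_lower_bound {V : Type*} (G : SimpleGraph V)
    (hlf : ∀ v : V, (G.neighborSet v).Finite) (x y : V) (hxy : G.Adj x y) :
    OR.ricci G x y ≥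
      -(max (1 - 1 / (OR.deg G x : ℝ) - 1 / (OR.deg G y : ℝ)
          - (OR.tri G x y : ℝ) / (min (OR.deg G x : ℝ) (OR.deg G y : ℝ))) 0)
      - max (1 - 1 / (OR.deg G x : ℝ) - 1 / (OR.deg G y : ℝ)
          - (OR.tri G x y : ℝ) / (max (OR.deg G x : ℝ) (OR.deg G y : ℝ))) 0
      + (OR.tri G x y : ℝ) / (max (OR.deg G x : ℝ) (OR.deg G y : ℝ)) := by
  classical
  have hdist : (G.dist x y : ℝ) = 1 := by
    rw [SimpleGraph.dist_eq_one_iff_adj.2 hxy]; norm_num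
  rw [ge_iff_le]
  unfold OR.ricci
  rw [hdist, div_one]
  rcases le_total (OR.deg G y) (OR.deg G x) with hdc | hdc
  · have h := JLproof.W_le_main G hlf x y hxy hdc
    have hmax : max (OR.deg G x : ℝ) (OR.deg G y : ℝ) = (OR.deg G x : ℝ) :=
      max_eq_left (by exact_mod_cast hdc)
    have hmin : min (OR.deg G x : ℝ) (OR.deg G y : ℝ) = (OR.deg G y : ℝ) :=
      min_eq_right (by exact_mod_cast hdc)
    rw [hmax, hmin]
    simp only [one_div, div_eq_mul_inv, one_mul]
    linarith
  · have h := JLproof.W_le_main G hlf y x hxy.symm hdc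
    rw [JLproof.tri_symm G x y] at h
    rw [JLproof.W_symm G (OR.rw G y) (OR.rw G x)] at h
    have hmax : max (OR.deg G x : ℝ) (OR.deg G y : ℝ) = (OR.deg G y : ℝ) :=
      max_eq_right (by exact_mod_cast hdc)
    have hmin : min (OR.deg G x : ℝ) (OR.deg G y : ℝ) = (OR.deg G x : ℝ) :=
      min_eq_left (by exact_mod_cast hdc)
    rw [hmax, hmin]
    simp only [one_div, div_eq_mul_inv, one_mul]
    have e : ∀ c : ℝ, max (1 - (OR.deg G y : ℝ)⁻¹ - (OR.deg G x : ℝ)⁻¹ - c) 0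
        = max (1 - (OR.deg G x : ℝ)⁻¹ - (OR.deg G y : ℝ)⁻¹ - c) 0 := fun c => by
      rw [show (1 - (OR.deg G y : ℝ)⁻¹ - (OR.deg G x : ℝ)⁻¹ - c)
        = (1 - (OR.deg G x : ℝ)⁻¹ - (OR.deg G y : ℝ)⁻¹ - c) from by ring]
    simp only [e] at h
    linarith
end
end

section
/- Let G be a locally finite graph and x, y adjacent vertices. Then κ(x,y) ≤ #(x,y)/(d_x ∨ d_y), where #(x,y) is the number of common neighbors of x and y. -/
/-!
A coupling of two probability measures can leave at most `min (m_x u) (m_y u)` of its mass on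
the diagonal at `u`, and every unit of mass moved off the diagonal costs at least `1`. Hence
`W(m_x, m_y) ≥ 1 - ∑ᵤ min (m_x u) (m_y u)`, and for the random walk measures of adjacent vertices
this overlap is `#(x,y) / (d_x ∨ d_y)`.
-/

open scoped Classical
noncomputable section

namespace OR

open Function

variable {V : Type*}

section Coupling

variable {μ ν : V → ℝ} {A : V → V → ℝ}

theorem isCoupling_mul (hμ : ∀ u, 0 ≤ μ u) (hν : ∀ v, 0 ≤ ν v) (hμf : (support μ).Finite)
    (hνf : (support ν).Finite) (hμ1 : ∑ᶠ u, μ u = 1) (hν1 : ∑ᶠ v, ν v = 1) :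
    IsCoupling μ ν fun u v => μ u * ν v := by
  refine ⟨fun u v => mul_nonneg (hμ u) (hν v), ?_, fun u => ?_, fun v => ?_⟩
  · exact (hμf.prod hνf).subset fun p hp => ⟨left_ne_zero_of_mul hp, right_ne_zero_of_mul hp⟩
  · rw [← mul_finsum, hν1, mul_one]
  · rw [← finsum_mul, hμ1, one_mul]

namespace IsCoupling

theorem support_row_finite (hA : IsCoupling μ ν A) (u : V) : (support (A u)).Finite :=
  (hA.2.1.image Prod.snd).subset fun v hv => ⟨(u, v), hv, rfl⟩

theorem support_col_finite (hA : IsCoupling μ ν A) (v : V) : (support fun u => A u v).Finite :=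
  (hA.2.1.image Prod.fst).subset fun u hu => ⟨(u, v), hu, rfl⟩

theorem le_left (hA : IsCoupling μ ν A) (u v : V) : A u v ≤ μ u :=
  hA.2.2.1 u ▸ single_le_finsum v (hA.support_row_finite u) (hA.1 u)

theorem le_right (hA : IsCoupling μ ν A) (u v : V) : A u v ≤ ν v :=
  hA.2.2.2 v ▸ single_le_finsum u (hA.support_col_finite v) fun w => hA.1 w v

theorem left_ne_zero (hA : IsCoupling μ ν A) {u v : V} (h : A u v ≠ 0) : μ u ≠ 0 :=
  ((lt_of_le_of_ne (hA.1 u v) h.symm).trans_le (hA.le_left u v)).ne'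

theorem right_ne_zero (hA : IsCoupling μ ν A) {u v : V} (h : A u v ≠ 0) : ν v ≠ 0 :=
  ((lt_of_le_of_ne (hA.1 u v) h.symm).trans_le (hA.le_right u v)).ne'

theorem support_left_finite (hA : IsCoupling μ ν A) : (support μ).Finite := by
  refine (hA.2.1.image Prod.fst).subset fun u hu => ?_
  obtain ⟨v, hv⟩ : ∃ v, A u v ≠ 0 := by
    by_contra! h
    exact hu (hA.2.2.1 u ▸ finsum_eq_zero_of_forall_eq_zero h)
  exact ⟨(u, v), hv, rfl⟩

theorem support_diag_finite (hA : IsCoupling μ ν A) : (support fun u => A u u).Finite :=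
  hA.support_left_finite.subset fun _ hu => hA.left_ne_zero hu

theorem finsum_diag_le_finsum_min (hA : IsCoupling μ ν A) :
    ∑ᶠ u, A u u ≤ ∑ᶠ u, min (μ u) (ν u) := by
  have hmin : (support fun u => min (μ u) (ν u)).Finite :=
    hA.support_left_finite.subset fun u hu hμu =>
      hu (show min (μ u) (ν u) = 0 by rw [hμu, min_eq_left ((hA.1 u u).trans (hA.le_right u u))])
  exact finsum_le_finsum' hA.support_diag_finite hmin fun u =>
    le_min (hA.le_left u u) (hA.le_right u u)

variable {d : V → V → ℝ}

theorem sub_le_finsum_cost_row (hA : IsCoupling μ ν A) (hd₀ : ∀ u v, 0 ≤ d u v)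
    (hd₁ : ∀ u v, u ≠ v → A u v ≠ 0 → 1 ≤ d u v) (u : V) :
    μ u - A u u ≤ ∑ᶠ v, A u v * d u v := by
  have hsingle : (support fun v => if v = u then A u v else 0).Finite :=
    (Set.finite_singleton u).subset fun v hv => by_contra fun h => hv (if_neg h)
  calc μ u - A u u = ∑ᶠ v, (A u v - if v = u then A u v else 0) := by
        rw [finsum_sub_distrib (hA.support_row_finite u) hsingle, ← hA.2.2.1 u,
          finsum_eq_single _ u fun v hv => if_neg hv, if_pos rfl]
    _ ≤ ∑ᶠ v, A u v * d u v := by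
      refine finsum_le_finsum' (((hA.support_row_finite u).union hsingle).subset
        (support_sub _ _)) ((hA.support_row_finite u).subset (support_mul_subset_left _ _))
        fun v => ?_
      by_cases huv : v = u
      · subst huv
        simpa using mul_nonneg (hA.1 v v) (hd₀ v v)
      by_cases hAuv : A u v = 0
      · simp [hAuv]
      simpa [huv] using le_mul_of_one_le_right (hA.1 u v) (hd₁ u v (Ne.symm huv) hAuv)

theorem sub_finsum_diag_le_cost (hA : IsCoupling μ ν A) (hd₀ : ∀ u v, 0 ≤ d u v)
    (hd₁ : ∀ u v, u ≠ v → A u v ≠ 0 → 1 ≤ d u v) :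
    ∑ᶠ u, μ u - ∑ᶠ u, A u u ≤ ∑ᶠ u, ∑ᶠ v, A u v * d u v := by
  have hcost : (support fun u => ∑ᶠ v, A u v * d u v).Finite := by
    refine hA.support_left_finite.subset fun u hu hμu => hu (finsum_eq_zero_of_forall_eq_zero ?_)
    intro v
    by_contra h
    exact hA.left_ne_zero (left_ne_zero_of_mul h) hμu
  rw [← finsum_sub_distrib hA.support_left_finite hA.support_diag_finite]
  exact finsum_le_finsum' ((hA.support_left_finite.union hA.support_diag_finite).subset
    (support_sub _ _)) hcost (hA.sub_le_finsum_cost_row hd₀ hd₁)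

end IsCoupling

-- `G.dist` vanishes between unreachable vertices, hence `hreach`.
theorem sub_finsum_min_le_W (G : SimpleGraph V) (hne : ∃ A, IsCoupling μ ν A)
    (hreach : ∀ u v, μ u ≠ 0 → ν v ≠ 0 → G.Reachable u v) :
    ∑ᶠ u, μ u - ∑ᶠ u, min (μ u) (ν u) ≤ W G μ ν := by
  obtain ⟨A₀, hA₀⟩ := hne
  refine le_csInf ⟨_, A₀, hA₀, rfl⟩ ?_
  rintro _ ⟨A, hA, rfl⟩
  calc ∑ᶠ u, μ u - ∑ᶠ u, min (μ u) (ν u) ≤ ∑ᶠ u, μ u - ∑ᶠ u, A u u :=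
        sub_le_sub_left hA.finsum_diag_le_finsum_min _
    _ ≤ _ := hA.sub_finsum_diag_le_cost (fun _ _ => Nat.cast_nonneg _) fun u v huv h => by
        exact_mod_cast (hreach u v (hA.left_ne_zero h) (hA.right_ne_zero h)).pos_dist_of_ne huv

end Coupling

section RandomWalk

variable {G : SimpleGraph V} {x y : V}

theorem finsum_indicator_const {s : Set V} (hs : s.Finite) (c : ℝ) :
    ∑ᶠ v, s.indicator (fun _ => c) v = s.ncard * c := by
  simp [← finsum_mem_def, finsum_mem_eq_finite_toFinset_sum _ hs, Set.ncard_eq_toFinset_card s hs]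

theorem deg_eq_ncard : deg G x = (G.neighborSet x).ncard :=
  Nat.card_coe_set_eq _

theorem deg_pos (hx : (G.neighborSet x).Finite) (hxy : G.Adj x y) : 0 < deg G x :=
  deg_eq_ncard (G := G) ▸ (Set.ncard_pos hx).2 ⟨y, hxy⟩

theorem rw_nonneg (G : SimpleGraph V) (x v : V) : 0 ≤ rw G x v := by
  unfold rw
  split <;> positivity

theorem adj_of_rw_ne_zero {v : V} (h : rw G x v ≠ 0) : G.Adj x v :=
  by_contra fun hxv => h (if_neg hxv)

theorem rw_eq_indicator (G : SimpleGraph V) (x : V) :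
    rw G x = (G.neighborSet x).indicator fun _ => ((deg G x : ℝ))⁻¹ := by
  ext v
  simp [rw, Set.indicator_apply]

theorem finsum_rw (hx : (G.neighborSet x).Finite) (hxy : G.Adj x y) : ∑ᶠ v, rw G x v = 1 := by
  rw [rw_eq_indicator, finsum_indicator_const hx, ← deg_eq_ncard,
    mul_inv_cancel₀ (Nat.cast_ne_zero.2 (deg_pos hx hxy).ne')]

theorem min_rw_eq_indicator (hx : 0 < deg G x) (hy : 0 < deg G y) :
    (fun v => min (rw G x v) (rw G y v)) =
      {w | G.Adj x w ∧ G.Adj y w}.indicator fun _ => (max (deg G x : ℝ) (deg G y : ℝ))⁻¹ := by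
  have hx' : (0 : ℝ) < deg G x := Nat.cast_pos.2 hx
  have hy' : (0 : ℝ) < deg G y := Nat.cast_pos.2 hy
  ext v
  simp only [rw, Set.indicator_apply, Set.mem_ofPred_eq]
  by_cases h : G.Adj x v ∧ G.Adj y v
  · rw [if_pos h, if_pos h.1, if_pos h.2]
    rcases le_total (deg G x : ℝ) (deg G y) with hle | hle
    · rw [max_eq_right hle, min_eq_right (inv_anti₀ hx' hle)]
    · rw [max_eq_left hle, min_eq_left (inv_anti₀ hy' hle)]
  · rw [if_neg h]
    rcases not_and_or.1 h with hxv | hyv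
    · rw [if_neg hxv]
      exact min_eq_left (rw_nonneg G y v)
    · rw [if_neg hyv]
      exact min_eq_right (rw_nonneg G x v)

theorem finsum_min_rw (hx : (G.neighborSet x).Finite) (hdx : 0 < deg G x) (hdy : 0 < deg G y) :
    ∑ᶠ v, min (rw G x v) (rw G y v) = tri G x y / max (deg G x : ℝ) (deg G y : ℝ) := by
  rw [min_rw_eq_indicator hdx hdy, finsum_indicator_const (hx.subset fun _ hw => hw.1), tri,
    Nat.card_coe_set_eq, div_eq_mul_inv]

end RandomWalk

end OR

open OR

theorem jost_liu_upper_bound {V : Type*} (G : SimpleGraph V)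
    (hlf : ∀ v : V, (G.neighborSet v).Finite) (x y : V) (hxy : G.Adj x y) :
    OR.ricci G x y ≤ (OR.tri G x y : ℝ) / (max (OR.deg G x : ℝ) (OR.deg G y : ℝ)) := by
  have hx₁ := finsum_rw (hlf x) hxy
  have hcoupling := isCoupling_mul (rw_nonneg G x) (rw_nonneg G y)
    ((hlf x).subset fun _ => adj_of_rw_ne_zero) ((hlf y).subset fun _ => adj_of_rw_ne_zero)
    hx₁ (finsum_rw (hlf y) hxy.symm)
  have hreach : ∀ u v, rw G x u ≠ 0 → rw G y v ≠ 0 → G.Reachable u v := fun u v hu hv =>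
    ((adj_of_rw_ne_zero hu).symm.reachable.trans hxy.reachable).trans
      (adj_of_rw_ne_zero hv).reachable
  have hW := sub_finsum_min_le_W G ⟨_, hcoupling⟩ hreach
  rw [hx₁, finsum_min_rw (hlf x) (deg_pos (hlf x) hxy) (deg_pos (hlf y) hxy.symm)] at hW
  rw [ricci, SimpleGraph.dist_eq_one_iff_adj.2 hxy, Nat.cast_one, div_one]
  linarith
end
end

section
/- For the (n−1)-gluing graph K_n +_{n−1} K'_n of two complete graphs on n vertices (n ≥ 5), the Ricci curvature of any edge (u_1, u_2) within K_n with u_1, u_2 ≠ u_0 and both adjacent to v_0 equals (n−1)/n. -/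
open scoped Classical
noncomputable section

namespace OR

variable {V : Type*}

/-- Condition for a cross edge `u_i v_j` in the `m`-gluing graph. -/
def cross (m : ℕ) {n : ℕ} (i j : Fin n) : Prop :=
  ((i : ℕ) = 0 ∧ (j : ℕ) = 0) ∨ ((i : ℕ) = 0 ∧ 1 ≤ (j : ℕ) ∧ (j : ℕ) ≤ m) ∨
    ((j : ℕ) = 0 ∧ 1 ≤ (i : ℕ) ∧ (i : ℕ) ≤ m)

/-- Adjacency of the `m`-gluing graph: `Sum.inl` is `K_n`, `Sum.inr` is `K'_n`. -/
def glueAdj (n m : ℕ) : Fin n ⊕ Fin n → Fin n ⊕ Fin n → Prop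
  | .inl i, .inl j => i ≠ j
  | .inr i, .inr j => i ≠ j
  | .inl i, .inr j => cross m i j
  | .inr j, .inl i => cross m i j

/-- The `m`-gluing graph `K_n +_m K'_n`. -/
def glue (n m : ℕ) : SimpleGraph (Fin n ⊕ Fin n) where
  Adj := glueAdj n m
  symm := by
    constructor
    rintro (i | i) (j | j) h <;> simp only [glueAdj] at h ⊢
    · exact h.symm
    · exact h
    · exact h
    · exact h.symm
  loopless := by
    constructor
    rintro (i | i) h <;> simp only [glueAdj] at h <;> exact h rfl

end OR

/-!
If `x ~ y` and every other vertex is adjacent to both or to neither, the random walk measures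
at `x` and `y` agree except that `m_x` puts `1/deg` on `y` where `m_y` puts it on `x`. Moving that
mass along the edge costs `1/deg`, and no coupling does better because `dist · x` is 1-Lipschitz
(Kantorovich duality, weak direction). Hence `κ(x, y) = 1 - 1/deg`. In the gluing graph two
vertices `u₁, u₂ ≠ u₀` of `K_n` are such a pair, both adjacent to exactly `v₀` outside `K_n`, and
have degree `n`.
-/

open SimpleGraph

namespace OR

variable {V : Type*}

theorem deg_eq_of_forall_adj_iff {G : SimpleGraph V} {x y : V}
    (h : ∀ w, w ≠ x → w ≠ y → (G.Adj x w ↔ G.Adj y w)) : deg G x = deg G y := by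
  refine Nat.card_congr ((Equiv.swap x y).subtypeEquiv fun w => ?_)
  simp only [mem_neighborSet]
  rcases eq_or_ne w x with rfl | hwx
  · simp
  rcases eq_or_ne w y with rfl | hwy
  · simp [G.adj_comm]
  rw [Equiv.swap_apply_of_ne_of_ne hwx hwy]
  exact h w hwx hwy

variable [Fintype V]

theorem IsCoupling.sum_mul_sub_sum_mul_le {μ ν : V → ℝ} {A : V → V → ℝ} (hA : IsCoupling μ ν A)
    {f : V → ℝ} {d : V → V → ℝ} (hf : ∀ u v, f u - f v ≤ d u v) :
    ∑ u, f u * μ u - ∑ v, f v * ν v ≤ ∑ᶠ u, ∑ᶠ v, A u v * d u v := by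
  obtain ⟨hA_nonneg, -, hA_row, hA_col⟩ := hA
  simp only [finsum_eq_sum_of_fintype] at hA_row hA_col ⊢
  calc ∑ u, f u * μ u - ∑ v, f v * ν v = ∑ u, ∑ v, A u v * (f u - f v) := by
        simp only [mul_sub, Finset.sum_sub_distrib, ← hA_row, ← hA_col, Finset.mul_sum]
        rw [Finset.sum_comm (f := fun v u => f v * A u v)]
        simp only [mul_comm]
    _ ≤ ∑ u, ∑ v, A u v * d u v := by
        gcongr with u _ v _
        exacts [hA_nonneg u v, hf u v]

section Transfer

variable {μ ν : V → ℝ} {a b : V} {c : ℝ}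

def transferPlan (μ ν : V → ℝ) (a b : V) (c : ℝ) : V → V → ℝ := fun x y =>
  (if x = y then min (μ x) (ν x) else 0) + if x = a ∧ y = b then c else 0

theorem sum_transferPlan_right (x : V) :
    ∑ y, transferPlan μ ν a b c x y = min (μ x) (ν x) + if x = a then c else 0 := by
  by_cases hx : x = a <;> simp [transferPlan, Finset.sum_add_distrib, hx]

theorem sum_transferPlan_left (y : V) :
    ∑ x, transferPlan μ ν a b c x y = min (μ y) (ν y) + if y = b then c else 0 := by
  by_cases hy : y = b <;> simp [transferPlan, Finset.sum_add_distrib, hy]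

theorem sum_sum_transferPlan_mul {d : V → V → ℝ} (hd : ∀ x, d x x = 0) :
    ∑ x, ∑ y, transferPlan μ ν a b c x y * d x y = c * d a b := by
  have hpt : ∀ x y,
      transferPlan μ ν a b c x y * d x y = if x = a ∧ y = b then c * d a b else 0 := by
    intro x y
    rcases eq_or_ne x y with rfl | hxy
    · rw [hd, mul_zero]
      split_ifs with h
      · rw [← h.1, ← h.2, hd, mul_zero]
      · rfl
    · simp only [transferPlan, if_neg hxy, zero_add, ite_mul, zero_mul]
      split_ifs with h
      · rw [h.1, h.2]
      · rfl
  simp only [hpt, ite_and, Finset.sum_ite_irrel, Finset.sum_ite_eq', Finset.mem_univ, if_true,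
    Finset.sum_const_zero]

theorem isCoupling_transferPlan (hμ : ∀ x, 0 ≤ μ x) (hν : ∀ x, 0 ≤ ν x) (hc : 0 ≤ c)
    (ha : μ a = ν a + c) (hb : ν b = μ b + c)
    (hrest : ∀ x, x ≠ a → x ≠ b → μ x = ν x) : IsCoupling μ ν (transferPlan μ ν a b c) := by
  refine ⟨fun x y => ?_, Set.toFinite _, fun x => ?_, fun y => ?_⟩
  · unfold transferPlan
    have := le_min (hμ x) (hν x)
    split_ifs <;> linarith
  · rw [finsum_eq_sum_of_fintype, sum_transferPlan_right]
    by_cases hxa : x = a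
    · subst hxa; rw [if_pos rfl, ha, min_eq_right (by linarith)]
    by_cases hxb : x = b
    · subst hxb; rw [if_neg hxa, hb, min_eq_left (by linarith), add_zero]
    rw [if_neg hxa, hrest x hxa hxb, min_self, add_zero]
  · rw [finsum_eq_sum_of_fintype, sum_transferPlan_left]
    by_cases hyb : y = b
    · subst hyb; rw [if_pos rfl, hb, min_eq_left (by linarith)]
    by_cases hya : y = a
    · subst hya; rw [if_neg hyb, ha, min_eq_right (by linarith), add_zero]
    rw [if_neg hyb, hrest y hya hyb, min_self, add_zero]

theorem W_eq_of_transfer {G : SimpleGraph V} (hG : G.Connected) (hμ : ∀ x, 0 ≤ μ x)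
    (hν : ∀ x, 0 ≤ ν x) (hc : 0 ≤ c) (ha : μ a = ν a + c) (hb : ν b = μ b + c)
    (hrest : ∀ x, x ≠ a → x ≠ b → μ x = ν x) : W G μ ν = c * G.dist a b := by
  have hlower : ∀ A, IsCoupling μ ν A →
      c * G.dist a b ≤ ∑ᶠ u, ∑ᶠ v, A u v * (G.dist u v : ℝ) := by
    intro A hA
    set f : V → ℝ := fun u => G.dist u b
    have hf : ∀ u v, f u - f v ≤ G.dist u v := fun u v => by
      have : (G.dist u b : ℝ) ≤ G.dist u v + G.dist v b := by exact_mod_cast hG.dist_triangle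
      simp only [f]
      linarith
    calc c * G.dist a b = ∑ u, f u * μ u - ∑ v, f v * ν v := by
          rw [← Finset.sum_sub_distrib, Finset.sum_eq_single a]
          · simp only [f, ← mul_sub, ha]
            ring
          · intro x _ hxa
            rcases eq_or_ne x b with rfl | hxb
            · simp [f]
            · rw [hrest x hxa hxb, sub_self]
          · simp
      _ ≤ _ := hA.sum_mul_sub_sum_mul_le hf
  have hplan : c * G.dist a b =
      ∑ᶠ u, ∑ᶠ v, transferPlan μ ν a b c u v * (G.dist u v : ℝ) := by
    simp only [finsum_eq_sum_of_fintype]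
    rw [sum_sum_transferPlan_mul fun x => by simp]
  have hcoupling := isCoupling_transferPlan hμ hν hc ha hb hrest
  refine le_antisymm (csInf_le ⟨c * G.dist a b, ?_⟩ ⟨_, hcoupling, hplan⟩)
    (le_csInf ⟨_, _, hcoupling, hplan⟩ ?_)
  all_goals rintro _ ⟨A, hA, rfl⟩; exact hlower A hA

end Transfer

theorem ricci_eq_one_sub_inv_deg {G : SimpleGraph V} {x y : V} (hG : G.Connected)
    (hxy : G.Adj x y) (h : ∀ w, w ≠ x → w ≠ y → (G.Adj x w ↔ G.Adj y w)) :
    ricci G x y = 1 - (deg G x : ℝ)⁻¹ := by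
  have hdeg := deg_eq_of_forall_adj_iff h
  have hrw_nonneg : ∀ z w, 0 ≤ rw G z w := fun z w => by
    unfold rw; split_ifs <;> positivity
  have hW : W G (rw G x) (rw G y) = (deg G x : ℝ)⁻¹ * G.dist y x :=
    W_eq_of_transfer hG (hrw_nonneg x) (hrw_nonneg y) (by positivity)
      (by simp [rw, hxy]) (by simp [rw, hxy.symm, hdeg])
      (fun w hwy hwx => by simp only [rw, h w hwx hwy, hdeg])
  rw [ricci, hW, dist_comm, dist_eq_one_iff_adj.mpr hxy]
  simp

variable {n m : ℕ}

theorem glue_adj_inl_inl (i j : Fin n) : (glue n m).Adj (.inl i) (.inl j) ↔ i ≠ j := Iff.rfl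

theorem glue_adj_inl_inr {i : Fin n} (hi : (i : ℕ) ≠ 0) (j : Fin n) :
    (glue n m).Adj (.inl i) (.inr j) ↔ (j : ℕ) = 0 ∧ (i : ℕ) ≤ m := by
  show cross m i j ↔ _
  unfold cross
  omega

theorem glue_connected [NeZero n] : (glue n m).Connected := by
  have hub : ∀ w, (glue n m).Reachable (.inl 0) w := by
    have h00 : (glue n m).Adj (.inl 0) (.inr 0) := Or.inl ⟨rfl, rfl⟩
    rintro (j | j) <;> rcases eq_or_ne j 0 with rfl | hj
    · rfl
    · exact Adj.reachable hj.symm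
    · exact h00.reachable
    · exact h00.reachable.trans (Adj.reachable (G := glue n m) hj.symm)
  exact (connected_iff_exists_forall_reachable _).mpr ⟨_, hub⟩

theorem deg_glue_inl {i : Fin n} (hi : (i : ℕ) ≠ 0) (him : (i : ℕ) ≤ m) :
    deg (glue n m) (.inl i) = n := by
  have : NeZero n := ⟨Fin.pos i |>.ne'⟩
  rw [deg, Nat.card_congr Equiv.subtypeSum, Nat.card_sum]
  simp only [mem_neighborSet, glue_adj_inl_inl, glue_adj_inl_inr hi, him, and_true,
    Fin.val_eq_zero_iff, Nat.card_eq_fintype_card, Fintype.card_subtype_compl,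
    Fintype.card_subtype_eq, Fintype.card_subtype_eq', Fintype.card_fin]
  have := i.isLt
  omega

theorem ricci_glue_inl {u₁ u₂ : Fin n} (h₁₂ : u₁ ≠ u₂) (h₁ : (u₁ : ℕ) ≠ 0) (h₂ : (u₂ : ℕ) ≠ 0)
    (h₁m : (u₁ : ℕ) ≤ m) (h₂m : (u₂ : ℕ) ≤ m) :
    ricci (glue n m) (.inl u₁) (.inl u₂) = 1 - (n : ℝ)⁻¹ := by
  have : NeZero n := ⟨Fin.pos u₁ |>.ne'⟩
  rw [ricci_eq_one_sub_inv_deg glue_connected ((glue_adj_inl_inl u₁ u₂).mpr h₁₂) ?_,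
    deg_glue_inl h₁ h₁m]
  rintro (j | j) hj₁ hj₂
  · simp only [glue_adj_inl_inl]
    exact ⟨fun _ h => hj₂ (congrArg _ h.symm), fun _ h => hj₁ (congrArg _ h.symm)⟩
  · simp only [glue_adj_inl_inr h₁, glue_adj_inl_inr h₂, h₁m, h₂m]

end OR

theorem glue_ricci_inside_general (n : ℕ) (u₁ u₂ : Fin n)
    (h₁₂ : u₁ ≠ u₂) (h₁ : (u₁ : ℕ) ≠ 0) (h₂ : (u₂ : ℕ) ≠ 0) :
    OR.ricci (OR.glue n (n - 1)) (Sum.inl u₁) (Sum.inl u₂) = ((n : ℝ) - 1) / n := by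
  have hn : (n : ℝ) ≠ 0 := by exact_mod_cast (Fin.pos u₁).ne'
  rw [OR.ricci_glue_inl h₁₂ h₁ h₂ (by omega) (by omega)]
  field_simp

theorem glue_ricci_inside (n : ℕ) (hn : 5 ≤ n) (u₁ u₂ : Fin n)
    (h₁₂ : u₁ ≠ u₂) (h₁ : (u₁ : ℕ) ≠ 0) (h₂ : (u₂ : ℕ) ≠ 0) :
    OR.ricci (OR.glue n (n - 1)) (Sum.inl u₁) (Sum.inl u₂) = ((n : ℝ) - 1) / n :=
  glue_ricci_inside_general n u₁ u₂ h₁₂ h₁ h₂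
end
end

section
/- For the (n−1)-gluing graph K_n +_{n−1} K'_n of two complete graphs on n vertices (n ≥ 5), the Ricci curvature of the edge (u_0, v_0) equals (2n−2)/(2n−1). -/
open scoped Classical
noncomputable section

/-! The vertices `u₀` and `v₀` are adjacent to all other `2n - 1` vertices, so their random-walk
measures are uniform off `u₀` resp. `v₀`. Swapping `u₀` and `v₀` turns one measure into the other
at cost `1/(2n-1)`, and the indicator of `v₀`, a 1-Lipschitz potential, shows that no plan is
cheaper. -/

namespace OR

variable {V : Type*} {G : SimpleGraph V} {μ ν : V → ℝ}

lemma cost_nonneg {A : V → V → ℝ} (hA : IsCoupling μ ν A) :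
    0 ≤ ∑ᶠ u, ∑ᶠ v, A u v * (G.dist u v : ℝ) :=
  finsum_nonneg fun u => finsum_nonneg fun v => mul_nonneg (hA.1 u v) (Nat.cast_nonneg _)

lemma W_le_cost {A : V → V → ℝ} (hA : IsCoupling μ ν A) :
    W G μ ν ≤ ∑ᶠ u, ∑ᶠ v, A u v * (G.dist u v : ℝ) :=
  csInf_le ⟨0, by rintro r ⟨B, hB, rfl⟩; exact cost_nonneg hB⟩ ⟨A, hA, rfl⟩

section Fintype

variable [Fintype V]

def equivPlan (μ : V → ℝ) (σ : V ≃ V) : V → V → ℝ := fun p q => if σ p = q then μ p else 0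

lemma isCoupling_equivPlan (σ : V ≃ V) (hμ : ∀ p, 0 ≤ μ p) (hν : ∀ p, ν (σ p) = μ p) :
    IsCoupling μ ν (equivPlan μ σ) := by
  refine ⟨fun p q => ?_, Set.toFinite _, fun p => ?_, fun q => ?_⟩
  · unfold equivPlan; split_ifs <;> simp [hμ]
  · simp [equivPlan, finsum_eq_sum_of_fintype]
  · rw [finsum_eq_sum_of_fintype, ← σ.apply_symm_apply q, hν]
    simp [equivPlan, ← Equiv.eq_symm_apply]

lemma W_le_sum_equiv (σ : V ≃ V) (hμ : ∀ p, 0 ≤ μ p) (hν : ∀ p, ν (σ p) = μ p) :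
    W G μ ν ≤ ∑ p, μ p * (G.dist p (σ p) : ℝ) := by
  refine (W_le_cost (isCoupling_equivPlan σ hμ hν)).trans_eq ?_
  simp [equivPlan, finsum_eq_sum_of_fintype, ite_mul]

/-- Kantorovich duality, the easy direction. -/
lemma sum_sub_sum_le_W {f : V → ℝ} (hf : ∀ p q, f p - f q ≤ G.dist p q)
    (hne : ∃ A, IsCoupling μ ν A) :
    ∑ p, μ p * f p - ∑ q, ν q * f q ≤ W G μ ν := by
  obtain ⟨A, hA⟩ := hne
  refine le_csInf ⟨_, A, hA, rfl⟩ ?_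
  rintro r ⟨B, ⟨hB0, -, hBrow, hBcol⟩, rfl⟩
  have hrow : ∀ p, μ p = ∑ q, B p q := fun p => by rw [← hBrow p, finsum_eq_sum_of_fintype]
  have hcol : ∀ q, ν q = ∑ p, B p q := fun q => by rw [← hBcol q, finsum_eq_sum_of_fintype]
  calc ∑ p, μ p * f p - ∑ q, ν q * f q = ∑ p, ∑ q, B p q * (f p - f q) := by
        simp only [hrow, hcol, Finset.sum_mul, mul_sub, Finset.sum_sub_distrib]
        rw [Finset.sum_comm (f := fun q p => B p q * f q)]
    _ ≤ ∑ p, ∑ q, B p q * (G.dist p q : ℝ) :=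
        Finset.sum_le_sum fun p _ => Finset.sum_le_sum fun q _ =>
          mul_le_mul_of_nonneg_left (hf p q) (hB0 p q)
    _ = ∑ᶠ u, ∑ᶠ v, B u v * (G.dist u v : ℝ) := by simp only [finsum_eq_sum_of_fintype]

variable {x y : V}

lemma deg_of_forall_adj (hx : ∀ w ≠ x, G.Adj x w) : deg G x = Fintype.card V - 1 := by
  have h : G.neighborSet x = {x}ᶜ := by
    ext w
    exact ⟨fun h => (G.ne_of_adj h).symm, hx w⟩
  rw [deg, h, Nat.card_eq_fintype_card, Fintype.card_compl_set, Set.card_singleton]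

lemma rw_of_forall_adj (hx : ∀ w ≠ x, G.Adj x w) (w : V) :
    rw G x w = if w = x then 0 else ((Fintype.card V : ℝ) - 1)⁻¹ := by
  have hcard : 1 ≤ Fintype.card V := Fintype.card_pos_iff.mpr ⟨x⟩
  by_cases h : w = x
  · simp [rw, h]
  · simp [rw, h, hx w h, deg_of_forall_adj hx, Nat.cast_sub hcard]

lemma W_rw_of_forall_adj (hxy : x ≠ y) (hx : ∀ w ≠ x, G.Adj x w) (hy : ∀ w ≠ y, G.Adj y w) :
    W G (rw G x) (rw G y) = ((Fintype.card V : ℝ) - 1)⁻¹ := by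
  have hc : 0 ≤ ((Fintype.card V : ℝ) - 1)⁻¹ := by
    have : (1 : ℝ) ≤ Fintype.card V := by exact_mod_cast Fintype.card_pos_iff.mpr ⟨x⟩
    exact inv_nonneg.mpr (by linarith)
  have hμ : ∀ p, 0 ≤ rw G x p := fun p => by
    rw [rw_of_forall_adj hx]; split_ifs; exacts [le_rfl, hc]
  have hν : ∀ p, rw G y (Equiv.swap x y p) = rw G x p := fun p => by
    simp only [rw_of_forall_adj hx, rw_of_forall_adj hy, Equiv.swap_apply_eq_iff,
      Equiv.swap_apply_right]
  have hdist : G.dist y x = 1 := SimpleGraph.dist_eq_one_iff_adj.mpr (hy x hxy)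
  apply le_antisymm
  · refine (W_le_sum_equiv _ hμ hν).trans_eq ?_
    rw [Fintype.sum_eq_add x y hxy]
    · simp [rw_of_forall_adj hx, hxy.symm, hdist]
    · intro p hp
      simp [Equiv.swap_apply_of_ne_of_ne hp.1 hp.2]
  · have hf : ∀ p q, (if p = y then 1 else 0 : ℝ) - (if q = y then 1 else 0) ≤ G.dist p q := by
      intro p q
      have hd : (0 : ℝ) ≤ G.dist p q := Nat.cast_nonneg _
      split_ifs with hp hq hq
      · linarith
      · subst hp
        simp [SimpleGraph.dist_eq_one_iff_adj.mpr (hy q hq)]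
      all_goals linarith
    have := sum_sub_sum_le_W (G := G) hf ⟨_, isCoupling_equivPlan _ hμ hν⟩
    simpa [rw_of_forall_adj hx, rw_of_forall_adj hy, hxy.symm] using this

lemma ricci_of_forall_adj (hxy : x ≠ y) (hx : ∀ w ≠ x, G.Adj x w) (hy : ∀ w ≠ y, G.Adj y w) :
    ricci G x y = 1 - ((Fintype.card V : ℝ) - 1)⁻¹ := by
  rw [ricci, W_rw_of_forall_adj hxy hx hy, SimpleGraph.dist_eq_one_iff_adj.mpr (hx y hxy.symm)]
  simp

end Fintype

lemma glue_adj_inl_zero {n m : ℕ} (hm : n - 1 ≤ m) (h0 : 0 < n) :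
    ∀ w ≠ Sum.inl ⟨0, h0⟩, (glue n m).Adj (Sum.inl ⟨0, h0⟩) w := by
  rintro (j | j) hj
  · exact fun h => hj (congrArg Sum.inl h.symm)
  · show cross m ⟨0, h0⟩ j
    have := j.isLt
    simp only [cross, true_and]
    omega

lemma glue_adj_inr_zero {n m : ℕ} (hm : n - 1 ≤ m) (h0 : 0 < n) :
    ∀ w ≠ Sum.inr ⟨0, h0⟩, (glue n m).Adj (Sum.inr ⟨0, h0⟩) w := by
  rintro (j | j) hj
  · show cross m j ⟨0, h0⟩
    have := j.isLt
    simp only [cross, true_and, and_true]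
    omega
  · exact fun h => hj (congrArg Sum.inr h.symm)

end OR

theorem glue_ricci_bridge (n : ℕ) (hn : 5 ≤ n) :
    OR.ricci (OR.glue n (n - 1)) (Sum.inl (⟨0, by omega⟩ : Fin n))
      (Sum.inr (⟨0, by omega⟩ : Fin n)) = (2 * (n : ℝ) - 2) / (2 * (n : ℝ) - 1) := by
  rw [OR.ricci_of_forall_adj Sum.inl_ne_inr (OR.glue_adj_inl_zero le_rfl _)
    (OR.glue_adj_inr_zero le_rfl _)]
  have : 2 * (n : ℝ) - 1 ≠ 0 := by
    have : (5 : ℝ) ≤ n := by exact_mod_cast hn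
    linarith
  rw [Fintype.card_sum, Fintype.card_fin, Nat.cast_add, ← two_mul]
  field_simp
  ring
end
end

section
/- In the m-gluing graph K_n +_m K'_n with n ≥ 5 and 2 ≤ m ≤ n−1, for any vertex u ∈ Γ_m(v_0) = {u_1,…,u_m}, the Ricci curvature satisfies κ(u_0, u) = (n² − mn + 2m)/(n(n+m)). For m = 1, κ(u_0, u_1) = (n−1)/(n+1). -/
open scoped Classical
noncomputable section

namespace GlueAux
open Finset OR

/-- indicator -/
def chi (P : Prop) : ℝ := if P then 1 else 0

lemma chi_pos {P : Prop} (h : P) : chi P = 1 := if_pos h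
lemma chi_neg {P : Prop} (h : ¬ P) : chi P = 0 := if_neg h
lemma chi_nonneg (P : Prop) : 0 ≤ chi P := by unfold chi; split <;> norm_num

variable {n m : ℕ}

lemma card_filter_ne (a : Fin n) : (univ.filter fun j => j ≠ a).card = n - 1 := by
  rw [filter_ne', card_erase_of_mem (mem_univ _), card_univ, Fintype.card_fin]

lemma card_filter_ne2 (a b : Fin n) (h : a ≠ b) :
    (univ.filter fun j => j ≠ a ∧ j ≠ b).card = n - 2 := by
  have : (univ.filter fun j => j ≠ a ∧ j ≠ b) = (univ.erase a).erase b := by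
    ext j; simp [and_comm]
  rw [this, card_erase_of_mem, card_erase_of_mem (mem_univ _), card_univ, Fintype.card_fin]
  · omega
  · simp [Ne.symm h]

lemma card_filter_valle (h : m < n) :
    (univ.filter fun k : Fin n => (k : ℕ) ≤ m).card = m + 1 := by
  have := Finset.card_bij' (s := univ.filter fun k : Fin n => (k : ℕ) ≤ m)
    (t := (univ : Finset (Fin (m+1))))
    (fun k _ => ⟨(k : ℕ), by
      rename_i hk; simp only [mem_filter] at hk; omega⟩)
    (fun a _ => ⟨(a : ℕ), by omega⟩)
    (by intros; simp) (by intro a ha; simp; omega)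
    (by intro a ha; simp) (by intro a ha; simp)
  rw [this, card_univ, Fintype.card_fin]

lemma card_filter_interval (h : m < n) :
    (univ.filter fun k : Fin n => 1 ≤ (k : ℕ) ∧ (k : ℕ) ≤ m).card = m := by
  have := Finset.card_bij' (s := univ.filter fun k : Fin n => 1 ≤ (k : ℕ) ∧ (k : ℕ) ≤ m)
    (t := (univ : Finset (Fin m)))
    (fun k hk => ⟨(k : ℕ) - 1, by simp only [mem_filter] at hk; omega⟩)
    (fun a _ => ⟨(a : ℕ) + 1, by omega⟩)
    (by intros; simp)
    (by intro a ha; simp)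
    (by intro a ha; simp only [mem_filter] at ha; ext; simp; omega)
    (by intro a ha; ext; simp)
  rw [this, card_univ, Fintype.card_fin]

lemma sum_chi (p : Fin n → Prop) : ∑ j, chi (p j) = ((univ.filter fun j => p j).card : ℝ) := by
  unfold chi; rw [Finset.sum_boole]

lemma sum_chi_eq (a : Fin n) : ∑ j, chi (j = a) = 1 := by
  rw [sum_chi, Finset.filter_congr_decidable, Finset.filter_eq']; simp

lemma sum_chi_ne (a : Fin n) (hn : 1 ≤ n) : ∑ j, chi (j ≠ a) = (n : ℝ) - 1 := by
  rw [sum_chi, Finset.filter_congr_decidable, card_filter_ne]; push_cast [hn]; ring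

lemma sum_chi_ne2 (a b : Fin n) (h : a ≠ b) (hn : 2 ≤ n) :
    ∑ j, chi (j ≠ a ∧ j ≠ b) = (n : ℝ) - 2 := by
  rw [sum_chi, Finset.filter_congr_decidable, card_filter_ne2 a b h]; push_cast [hn]; ring

lemma sum_chi_valle (h : m < n) : ∑ k : Fin n, chi ((k : ℕ) ≤ m) = (m : ℝ) + 1 := by
  rw [sum_chi, Finset.filter_congr_decidable, card_filter_valle h]; push_cast; ring

lemma sum_chi_interval (h : m < n) :
    ∑ k : Fin n, chi (1 ≤ (k : ℕ) ∧ (k : ℕ) ≤ m) = (m : ℝ) := by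
  rw [sum_chi, Finset.filter_congr_decidable, card_filter_interval h]

variable {V : Type*} [Fintype V]

lemma cost_eq (G : SimpleGraph V) (A : V → V → ℝ) :
    ∑ᶠ u, ∑ᶠ v, A u v * (G.dist u v : ℝ) = ∑ u, ∑ v, A u v * (G.dist u v : ℝ) := by
  rw [finsum_eq_sum_of_fintype]
  exact Finset.sum_congr rfl fun u _ => finsum_eq_sum_of_fintype _

lemma dual_le (G : SimpleGraph V) (μ ν : V → ℝ) (A : V → V → ℝ) (f : V → ℝ)
    (hA : OR.IsCoupling μ ν A) (hf : ∀ u v, f u - f v ≤ (G.dist u v : ℝ)) :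
    ∑ u, f u * μ u - ∑ v, f v * ν v ≤ ∑ᶠ u, ∑ᶠ v, A u v * (G.dist u v : ℝ) := by
  obtain ⟨hpos, -, hrow, hcol⟩ := hA
  have hrow' : ∀ u, ∑ v, A u v = μ u := fun u => by
    rw [← finsum_eq_sum_of_fintype]; exact hrow u
  have hcol' : ∀ v, ∑ u, A u v = ν v := fun v => by
    rw [← finsum_eq_sum_of_fintype]; exact hcol v
  rw [cost_eq]
  have h1 : ∑ u, f u * μ u = ∑ u, ∑ v, A u v * f u := by
    refine Finset.sum_congr rfl fun u _ => ?_
    rw [← hrow' u, Finset.mul_sum]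
    exact Finset.sum_congr rfl fun v _ => mul_comm _ _
  have h2 : ∑ v, f v * ν v = ∑ u, ∑ v, A u v * f v := by
    rw [Finset.sum_comm]
    refine Finset.sum_congr rfl fun v _ => ?_
    rw [← hcol' v, Finset.mul_sum]
    exact Finset.sum_congr rfl fun u _ => mul_comm _ _
  rw [h1, h2, ← Finset.sum_sub_distrib]
  refine Finset.sum_le_sum fun u _ => ?_
  rw [← Finset.sum_sub_distrib]
  refine Finset.sum_le_sum fun v _ => ?_
  rw [← mul_sub]
  exact mul_le_mul_of_nonneg_left (hf u v) (hpos u v)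

lemma W_eq (G : SimpleGraph V) (μ ν : V → ℝ) (A : V → V → ℝ) (f : V → ℝ) (c : ℝ)
    (hA : OR.IsCoupling μ ν A)
    (hcost : ∑ u, ∑ v, A u v * (G.dist u v : ℝ) = c)
    (hf : ∀ u v, f u - f v ≤ (G.dist u v : ℝ))
    (hval : ∑ u, f u * μ u - ∑ v, f v * ν v = c) :
    OR.W G μ ν = c := by
  have hmem : c ∈ {r | ∃ A, OR.IsCoupling μ ν A ∧ r = ∑ᶠ u, ∑ᶠ v, A u v * (G.dist u v : ℝ)} :=
    ⟨A, hA, by rw [cost_eq]; exact hcost.symm⟩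
  have hlb : ∀ r ∈ {r | ∃ A, OR.IsCoupling μ ν A ∧
      r = ∑ᶠ u, ∑ᶠ v, A u v * (G.dist u v : ℝ)}, c ≤ r := by
    rintro r ⟨B, hB, rfl⟩
    rw [← hval]
    exact dual_le G μ ν B f hB hf
  exact le_antisymm (csInf_le ⟨c, hlb⟩ hmem) (le_csInf ⟨c, hmem⟩ hlb)

open OR Finset
variable {n m : ℕ}

lemma adj_ll (a b : Fin n) : (glue n m).Adj (.inl a) (.inl b) ↔ a ≠ b := Iff.rfl
lemma adj_lr (a b : Fin n) : (glue n m).Adj (.inl a) (.inr b) ↔ cross m a b := Iff.rfl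
lemma adj_rl (a b : Fin n) : (glue n m).Adj (.inr a) (.inl b) ↔ cross m b a := Iff.rfl
lemma adj_rr (a b : Fin n) : (glue n m).Adj (.inr a) (.inr b) ↔ a ≠ b := Iff.rfl

lemma cross_iff (a b : Fin n) : cross m a b ↔
    ((a : ℕ) = 0 ∧ (b : ℕ) ≤ m) ∨ ((b : ℕ) = 0 ∧ 1 ≤ (a : ℕ) ∧ (a : ℕ) ≤ m) := by
  unfold cross; omega

lemma reach (hn : 0 < n) (u v : Fin n ⊕ Fin n) : (glue n m).Reachable u v := by
  set z : Fin n := ⟨0, hn⟩ with hz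
  have h0 : ∀ w : Fin n ⊕ Fin n, (glue n m).Reachable (.inl z) w := by
    have h1 : (glue n m).Adj (.inl z) (.inr z) := by
      rw [adj_lr, cross_iff]; left; simp [hz]
    rintro (j | j)
    · by_cases h : z = j
      · subst h; rfl
      · exact ((adj_ll z j).mpr h).reachable
    · by_cases h : z = j
      · subst h; exact h1.reachable
      · exact h1.reachable.trans ((adj_rr z j).mpr h).reachable
  exact (h0 u).symm.trans (h0 v)

lemma one_le_dist (hn : 0 < n) {u v : Fin n ⊕ Fin n} (h : u ≠ v) :
    1 ≤ (glue n m).dist u v := (reach hn u v).pos_dist_of_ne h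

lemma dist_eq_one {u v : Fin n ⊕ Fin n} (h : (glue n m).Adj u v) :
    (glue n m).dist u v = 1 := SimpleGraph.dist_eq_one_iff_adj.mpr h

lemma two_le_dist (hn : 0 < n) {u v : Fin n ⊕ Fin n} (h : u ≠ v)
    (hadj : ¬ (glue n m).Adj u v) : 2 ≤ (glue n m).dist u v := by
  have h1 : 1 ≤ (glue n m).dist u v := one_le_dist hn h
  have h2 : (glue n m).dist u v ≠ 1 := fun e => hadj (SimpleGraph.dist_eq_one_iff_adj.mp e)
  omega

lemma dist_eq_two (hn : 0 < n) {u v w : Fin n ⊕ Fin n} (huv : u ≠ v)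
    (hadj : ¬ (glue n m).Adj u v) (h1 : (glue n m).Adj u w) (h2 : (glue n m).Adj w v) :
    (glue n m).dist u v = 2 := by
  refine le_antisymm ?_ (two_le_dist hn huv hadj)
  have := SimpleGraph.dist_le (SimpleGraph.Walk.cons h1 (SimpleGraph.Walk.cons h2 SimpleGraph.Walk.nil))
  simpa using this

lemma deg_card {V : Type*} [Fintype V] (G : SimpleGraph V) (x : V) :
    OR.deg G x = (univ.filter (G.Adj x)).card := by
  unfold OR.deg
  rw [Nat.card_coe_set_eq, SimpleGraph.neighborSet, Set.ncard_eq_toFinset_card',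
    Set.toFinset_setOf, Finset.filter_congr_decidable]

lemma nsum_ite (p : Fin n → Prop) :
    (∑ j : Fin n, if p j then (1 : ℕ) else 0) = (univ.filter fun j => p j).card :=
  (Finset.card_filter _ _).symm

lemma deg_u0 (hn : 5 ≤ n) (hmn : m < n) :
    OR.deg (glue n m) (Sum.inl (⟨0, Nat.pos_of_ne_zero (by omega)⟩ : Fin n)) = n + m := by
  rw [deg_card, Finset.card_filter, Fintype.sum_sum_type]
  have e1 : (∑ j : Fin n, if (glue n m).Adj (.inl ⟨0, Nat.pos_of_ne_zero (by omega)⟩) (.inl j) then (1:ℕ) else 0)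
      = n - 1 := by
    have : ∀ j : Fin n, (glue n m).Adj (.inl ⟨0, Nat.pos_of_ne_zero (by omega)⟩) (.inl j) ↔ j ≠ ⟨0, Nat.pos_of_ne_zero (by omega)⟩ := by
      intro j; rw [adj_ll]; exact ne_comm
    rw [Finset.sum_congr rfl fun j _ => if_congr (this j) rfl rfl]
    calc (∑ j : Fin n, if j ≠ (⟨0, Nat.pos_of_ne_zero (by omega)⟩ : Fin n) then (1:ℕ) else 0)
        = (univ.filter fun j : Fin n => j ≠ ⟨0, Nat.pos_of_ne_zero (by omega)⟩).card := (Finset.card_filter _ _).symm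
      _ = n - 1 := card_filter_ne _
  have e2 : (∑ j : Fin n, if (glue n m).Adj (.inl ⟨0, Nat.pos_of_ne_zero (by omega)⟩) (.inr j) then (1:ℕ) else 0)
      = m + 1 := by
    have : ∀ j : Fin n, (glue n m).Adj (.inl ⟨0, Nat.pos_of_ne_zero (by omega)⟩) (.inr j) ↔ (j : ℕ) ≤ m := by
      intro j; rw [adj_lr, cross_iff]; simp
    rw [Finset.sum_congr rfl fun j _ => if_congr (this j) rfl rfl]
    calc (∑ j : Fin n, if (j : ℕ) ≤ m then (1:ℕ) else 0)
        = (univ.filter fun j : Fin n => (j : ℕ) ≤ m).card := (Finset.card_filter _ _).symm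
      _ = m + 1 := card_filter_valle hmn
  rw [e1, e2]; omega

lemma deg_ui (hn : 5 ≤ n) (hmn : m < n) (i : Fin n) (hi1 : 1 ≤ (i : ℕ)) (hi2 : (i : ℕ) ≤ m) :
    OR.deg (glue n m) (Sum.inl i) = n := by
  rw [deg_card, Finset.card_filter, Fintype.sum_sum_type]
  have e1 : (∑ j : Fin n, if (glue n m).Adj (.inl i) (.inl j) then (1:ℕ) else 0) = n - 1 := by
    have : ∀ j : Fin n, (glue n m).Adj (.inl i) (.inl j) ↔ j ≠ i := by
      intro j; rw [adj_ll]; exact ne_comm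
    rw [Finset.sum_congr rfl fun j _ => if_congr (this j) rfl rfl]
    calc (∑ j : Fin n, if j ≠ i then (1:ℕ) else 0)
        = (univ.filter fun j : Fin n => j ≠ i).card := (Finset.card_filter _ _).symm
      _ = n - 1 := card_filter_ne _
  have e2 : (∑ j : Fin n, if (glue n m).Adj (.inl i) (.inr j) then (1:ℕ) else 0) = 1 := by
    have : ∀ j : Fin n, (glue n m).Adj (.inl i) (.inr j) ↔ j = ⟨0, Nat.pos_of_ne_zero (by omega)⟩ := by
      intro j; rw [adj_lr, cross_iff, Fin.ext_iff]; simp; omega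
    rw [Finset.sum_congr rfl fun j _ => if_congr (this j) rfl rfl, Finset.sum_ite_eq']
    simp
  rw [e1, e2]; omega


lemma chi_congr {P Q : Prop} (h : P ↔ Q) : chi P = chi Q := by
  unfold chi; by_cases hp : P
  · rw [if_pos hp, if_pos (h.mp hp)]
  · rw [if_neg hp, if_neg (fun hq => hp (h.mpr hq))]

lemma chi_mul_le_one {P Q : Prop} : chi P * chi Q ≤ 1 := by
  unfold chi; split <;> split <;> norm_num

lemma sum_coef_chi {c : ℝ} {P : Fin n → Prop} {v : ℝ} (h : ∑ b, chi (P b) = v) :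
    ∑ b, c * chi (P b) = c * v := by rw [← Finset.mul_sum, h]

lemma sum_delta (g : Fin n → ℝ) (b : Fin n) : ∑ a, g a * chi (b = a) = g b := by
  have h : ∀ a : Fin n, g a * chi (b = a) = if a = b then g a else 0 := by
    intro a; unfold chi; by_cases hab : a = b
    · subst hab; simp
    · rw [if_neg (fun h' : b = a => hab h'.symm), if_neg hab]; ring
  rw [Finset.sum_congr rfl fun a _ => h a, Finset.sum_ite_eq' univ b g]
  simp

lemma sum_chi_val0 (hn : 0 < n) : ∑ b : Fin n, chi ((b : ℕ) = 0) = 1 := by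
  have hiff : ∀ b : Fin n, ((b : ℕ) = 0 ↔ b = (⟨0, hn⟩ : Fin n)) := by
    intro b; simp [Fin.ext_iff]
  rw [Finset.sum_congr rfl fun b _ => chi_congr (hiff b)]
  exact sum_chi_eq _

lemma sum_chi_ne0ne (hn : 2 ≤ n) (i : Fin n) (hi : (i : ℕ) ≠ 0) :
    ∑ b : Fin n, chi ((b : ℕ) ≠ 0 ∧ b ≠ i) = (n : ℝ) - 2 := by
  have h0 : 0 < n := by omega
  have hiff : ∀ b : Fin n, (((b : ℕ) ≠ 0 ∧ b ≠ i) ↔ (b ≠ (⟨0, h0⟩ : Fin n) ∧ b ≠ i)) := by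
    intro b; simp [Fin.ext_iff]
  rw [Finset.sum_congr rfl fun b _ => chi_congr (hiff b)]
  refine sum_chi_ne2 _ _ ?_ hn
  simp [Fin.ext_iff]; omega

lemma rw_u0 (hn : 5 ≤ n) (hmn : m < n) (w : Fin n ⊕ Fin n) :
    OR.rw (glue n m) (.inl ⟨0, Nat.pos_of_ne_zero (by omega)⟩) w
      = chi ((glue n m).Adj (.inl ⟨0, Nat.pos_of_ne_zero (by omega)⟩) w) * ((n : ℝ) + m)⁻¹ := by
  unfold OR.rw chi
  rw [deg_u0 hn hmn]
  split_ifs with h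
  · push_cast; ring
  · ring

lemma rw_ui (hn : 5 ≤ n) (hmn : m < n) (i : Fin n) (hi1 : 1 ≤ (i : ℕ)) (hi2 : (i : ℕ) ≤ m)
    (w : Fin n ⊕ Fin n) :
    OR.rw (glue n m) (.inl i) w = chi ((glue n m).Adj (.inl i) w) * ((n : ℝ))⁻¹ := by
  unfold OR.rw chi
  rw [deg_ui hn hmn i hi1 hi2]
  split_ifs with h
  · ring
  · ring

/-- The optimal coupling for `m ≥ 2`. -/
def A2 (m : ℕ) {n : ℕ} (i : Fin n) (p q r : ℝ) : Fin n ⊕ Fin n → Fin n ⊕ Fin n → ℝ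
  | .inl a, .inl b => (chi ((a : ℕ) ≠ 0 ∧ a ≠ i) * p) * chi (b = a)
      + (chi (a = i) * (p / ((n : ℝ) - 2))) * chi ((b : ℕ) ≠ 0 ∧ b ≠ i)
  | .inl _, .inr _ => 0
  | .inr a, .inl b => (chi (1 ≤ (a : ℕ) ∧ (a : ℕ) ≤ m) * (q / m)) * chi ((b : ℕ) = 0)
      + (chi (1 ≤ (a : ℕ) ∧ (a : ℕ) ≤ m) * (r / m)) * chi ((b : ℕ) ≠ 0 ∧ b ≠ i)
  | .inr a, .inr b => (chi ((a : ℕ) = 0) * p) * chi ((b : ℕ) = 0)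
      + (chi (1 ≤ (a : ℕ) ∧ (a : ℕ) ≤ m) * ((q - p) / m)) * chi ((b : ℕ) = 0)

/-- The coupling multiplied by distances, for `m ≥ 2`. -/
def B2 (m : ℕ) {n : ℕ} (i : Fin n) (p q r : ℝ) : Fin n ⊕ Fin n → Fin n ⊕ Fin n → ℝ
  | .inl a, .inl b => (chi (a = i) * (p / ((n : ℝ) - 2))) * chi ((b : ℕ) ≠ 0 ∧ b ≠ i)
  | .inl _, .inr _ => 0
  | .inr a, .inl b => (chi (1 ≤ (a : ℕ) ∧ (a : ℕ) ≤ m) * (q / m)) * chi ((b : ℕ) = 0)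
      + (chi (1 ≤ (a : ℕ) ∧ (a : ℕ) ≤ m) * (2 * r / m)) * chi ((b : ℕ) ≠ 0 ∧ b ≠ i)
  | .inr a, .inr b => (chi (1 ≤ (a : ℕ) ∧ (a : ℕ) ≤ m) * ((q - p) / m)) * chi ((b : ℕ) = 0)

/-- The Kantorovich potential for `m ≥ 2`. -/
def f2 {n : ℕ} (i : Fin n) : Fin n ⊕ Fin n → ℝ
  | .inl a => if (a : ℕ) = 0 ∨ a = i then 1 else 0
  | .inr b => if (b : ℕ) = 0 then 1 else 2

lemma basic_facts (hn : 5 ≤ n) (hm1 : 1 ≤ m) :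
    (0:ℝ) < n ∧ (0:ℝ) < m ∧ (0:ℝ) < (n:ℝ) + m ∧ (0:ℝ) < (n:ℝ) - 2 := by
  have h1 : (5:ℝ) ≤ (n:ℝ) := by exact_mod_cast hn
  have h2 : (1:ℝ) ≤ (m:ℝ) := by exact_mod_cast hm1
  refine ⟨by linarith, by linarith, by linarith, by linarith⟩

lemma adj_u0_l (hn : 5 ≤ n) (a : Fin n) :
    (glue n m).Adj (.inl ⟨0, Nat.pos_of_ne_zero (by omega)⟩) (.inl a) ↔ (a : ℕ) ≠ 0 := by
  rw [adj_ll]; simp [Fin.ext_iff]; omega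

lemma adj_u0_r (hn : 5 ≤ n) (a : Fin n) :
    (glue n m).Adj (.inl ⟨0, Nat.pos_of_ne_zero (by omega)⟩) (.inr a) ↔ (a : ℕ) ≤ m := by
  rw [adj_lr, cross_iff]; simp

lemma adj_ui_l (i a : Fin n) : (glue n m).Adj (.inl i) (.inl a) ↔ a ≠ i := by
  rw [adj_ll]; exact ne_comm

lemma adj_ui_r (i : Fin n) (hi1 : 1 ≤ (i : ℕ)) (hi2 : (i : ℕ) ≤ m) (a : Fin n) :
    (glue n m).Adj (.inl i) (.inr a) ↔ (a : ℕ) = 0 := by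
  rw [adj_lr, cross_iff]; omega

lemma A2_rows (hn : 5 ≤ n) (hm1 : 1 ≤ m) (hmn : m < n) (i : Fin n)
    (hi1 : 1 ≤ (i : ℕ)) (hi2 : (i : ℕ) ≤ m) (p q r : ℝ)
    (hp : p = ((n : ℝ) + m)⁻¹) (hq : q = ((n : ℝ))⁻¹)
    (hr : r = q - p - p / ((n : ℝ) - 2)) (u : Fin n ⊕ Fin n) :
    ∑ᶠ v, A2 m i p q r u v = OR.rw (glue n m) (.inl (⟨0, Nat.pos_of_ne_zero (by omega)⟩ : Fin n)) u := by
  obtain ⟨hn0, hm0, hnm0, hn20⟩ := basic_facts hn hm1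
  have hi0 : (i : ℕ) ≠ 0 := by omega
  subst hr; subst hq; subst hp
  rw [finsum_eq_sum_of_fintype, Fintype.sum_sum_type, rw_u0 hn hmn]
  rcases u with a | a
  · simp only [A2]
    rw [Finset.sum_add_distrib, sum_coef_chi (sum_chi_eq a),
      sum_coef_chi (sum_chi_ne0ne (by omega) i hi0), Finset.sum_const_zero,
      chi_congr (adj_u0_l hn a)]
    by_cases hai : a = i
    · subst hai
      rw [chi_neg (by simp : ¬((a : ℕ) ≠ 0 ∧ a ≠ a)), chi_pos rfl, chi_pos hi0]
      field_simp
      ring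
    · rw [chi_neg hai, chi_congr (show ((a : ℕ) ≠ 0 ∧ a ≠ i) ↔ (a : ℕ) ≠ 0 from
        ⟨fun h => h.1, fun h => ⟨h, hai⟩⟩)]
      ring
  · simp only [A2]
    rw [Finset.sum_add_distrib, Finset.sum_add_distrib,
      sum_coef_chi (sum_chi_val0 (by omega)), sum_coef_chi (sum_chi_ne0ne (by omega) i hi0),
      sum_coef_chi (sum_chi_val0 (by omega)), sum_coef_chi (sum_chi_val0 (by omega)),
      chi_congr (adj_u0_r hn a)]
    by_cases ha0 : (a : ℕ) = 0
    · rw [chi_neg (by omega : ¬(1 ≤ (a : ℕ) ∧ (a : ℕ) ≤ m)), chi_pos ha0,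
        chi_pos (by omega : (a : ℕ) ≤ m)]
      ring
    · rw [chi_neg ha0]
      by_cases ham : (a : ℕ) ≤ m
      · rw [chi_pos (by omega : 1 ≤ (a : ℕ) ∧ (a : ℕ) ≤ m), chi_pos ham]
        field_simp
        ring
      · rw [chi_neg (by omega : ¬(1 ≤ (a : ℕ) ∧ (a : ℕ) ≤ m)), chi_neg ham]
        ring

lemma A2_cols (hn : 5 ≤ n) (hm1 : 1 ≤ m) (hmn : m < n) (i : Fin n)
    (hi1 : 1 ≤ (i : ℕ)) (hi2 : (i : ℕ) ≤ m) (p q r : ℝ)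
    (hp : p = ((n : ℝ) + m)⁻¹) (hq : q = ((n : ℝ))⁻¹)
    (hr : r = q - p - p / ((n : ℝ) - 2)) (v : Fin n ⊕ Fin n) :
    ∑ᶠ u, A2 m i p q r u v = OR.rw (glue n m) (.inl i) v := by
  obtain ⟨hn0, hm0, hnm0, hn20⟩ := basic_facts hn hm1
  have hi0 : (i : ℕ) ≠ 0 := by omega
  rw [finsum_eq_sum_of_fintype, Fintype.sum_sum_type, rw_ui hn hmn i hi1 hi2]
  rcases v with b | b
  · simp only [A2]
    rw [Finset.sum_add_distrib, Finset.sum_add_distrib, sum_delta (fun a => chi ((a : ℕ) ≠ 0 ∧ a ≠ i) * p) b,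
      show (∑ a : Fin n, (chi (a = i) * (p / ((n : ℝ) - 2))) * chi ((b : ℕ) ≠ 0 ∧ b ≠ i))
        = ∑ a : Fin n, ((p / ((n : ℝ) - 2)) * chi ((b : ℕ) ≠ 0 ∧ b ≠ i)) * chi (a = i)
        from Finset.sum_congr rfl fun a _ => by ring,
      sum_coef_chi (sum_chi_eq i),
      show (∑ a : Fin n, (chi (1 ≤ (a : ℕ) ∧ (a : ℕ) ≤ m) * (q / m)) * chi ((b : ℕ) = 0))
        = ∑ a : Fin n, ((q / m) * chi ((b : ℕ) = 0)) * chi (1 ≤ (a : ℕ) ∧ (a : ℕ) ≤ m)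
        from Finset.sum_congr rfl fun a _ => by ring,
      sum_coef_chi (sum_chi_interval hmn),
      show (∑ a : Fin n, (chi (1 ≤ (a : ℕ) ∧ (a : ℕ) ≤ m) * (r / m)) * chi ((b : ℕ) ≠ 0 ∧ b ≠ i))
        = ∑ a : Fin n, ((r / m) * chi ((b : ℕ) ≠ 0 ∧ b ≠ i)) * chi (1 ≤ (a : ℕ) ∧ (a : ℕ) ≤ m)
        from Finset.sum_congr rfl fun a _ => by ring,
      sum_coef_chi (sum_chi_interval hmn),
      chi_congr (adj_ui_l i b)]
    by_cases hb0 : (b : ℕ) = 0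
    · rw [chi_neg (by omega : ¬((b : ℕ) ≠ 0 ∧ b ≠ i)), chi_pos hb0,
        chi_pos (show b ≠ i from fun h => hi0 (h ▸ hb0))]
      subst hr; subst hq; subst hp
      field_simp
      ring
    · by_cases hbi : b = i
      · rw [chi_neg (by simp [hbi] : ¬((b : ℕ) ≠ 0 ∧ b ≠ i)), chi_neg hb0, chi_neg (by simp [hbi])]
        ring
      · rw [chi_pos ⟨hb0, hbi⟩, chi_neg hb0, chi_pos hbi]
        subst hr; subst hq; subst hp
        field_simp
        ring
  · simp only [A2]
    rw [Finset.sum_const_zero, Finset.sum_add_distrib,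
      show (∑ a : Fin n, (chi ((a : ℕ) = 0) * p) * chi ((b : ℕ) = 0))
        = ∑ a : Fin n, (p * chi ((b : ℕ) = 0)) * chi ((a : ℕ) = 0)
        from Finset.sum_congr rfl fun a _ => by ring,
      sum_coef_chi (sum_chi_val0 (by omega)),
      show (∑ a : Fin n, (chi (1 ≤ (a : ℕ) ∧ (a : ℕ) ≤ m) * ((q - p) / m)) * chi ((b : ℕ) = 0))
        = ∑ a : Fin n, (((q - p) / m) * chi ((b : ℕ) = 0)) * chi (1 ≤ (a : ℕ) ∧ (a : ℕ) ≤ m)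
        from Finset.sum_congr rfl fun a _ => by ring,
      sum_coef_chi (sum_chi_interval hmn),
      chi_congr (adj_ui_r i hi1 hi2 b)]
    by_cases hb0 : (b : ℕ) = 0
    · rw [chi_pos hb0]
      subst hr; subst hq; subst hp
      field_simp
      ring
    · rw [chi_neg hb0]
      ring

lemma dist_cast_zero (u : Fin n ⊕ Fin n) : (((glue n m).dist u u : ℕ) : ℝ) = 0 := by
  rw [SimpleGraph.dist_self]; norm_num

lemma dist_cast_one {u v : Fin n ⊕ Fin n} (h : (glue n m).Adj u v) :
    (((glue n m).dist u v : ℕ) : ℝ) = 1 := by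
  rw [dist_eq_one h]; norm_num

lemma dist_cast_two (hn : 0 < n) {u v w : Fin n ⊕ Fin n} (huv : u ≠ v)
    (hnadj : ¬ (glue n m).Adj u v) (h1 : (glue n m).Adj u w) (h2 : (glue n m).Adj w v) :
    (((glue n m).dist u v : ℕ) : ℝ) = 2 := by
  rw [dist_eq_two hn huv hnadj h1 h2]; norm_num

lemma A2_cost (hn : 5 ≤ n) (hm1 : 1 ≤ m) (hmn : m < n) (i : Fin n)
    (hi1 : 1 ≤ (i : ℕ)) (hi2 : (i : ℕ) ≤ m) (p q r : ℝ)
    (hp : p = ((n : ℝ) + m)⁻¹) (hq : q = ((n : ℝ))⁻¹)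
    (hr : r = q - p - p / ((n : ℝ) - 2)) :
    ∑ u, ∑ v, A2 m i p q r u v * ((glue n m).dist u v : ℝ)
      = 2 * m * ((n : ℝ) - 1) / ((n : ℝ) * ((n : ℝ) + m)) := by
  obtain ⟨hn0, hm0, hnm0, hn20⟩ := basic_facts hn hm1
  have hi0 : (i : ℕ) ≠ 0 := by omega
  have hpt : ∀ u v, A2 m i p q r u v * ((glue n m).dist u v : ℝ) = B2 m i p q r u v := by
    rintro (a | a) (b | b) <;> simp only [A2, B2]
    · by_cases hba : b = a
      · subst hba
        rw [dist_cast_zero, mul_zero]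
        by_cases hbi : b = i
        · rw [chi_neg (show ¬((b : ℕ) ≠ 0 ∧ b ≠ i) from fun h => h.2 hbi)]; ring
        · rw [chi_neg hbi]; ring
      · rw [chi_neg hba]
        by_cases hbc : ((b : ℕ) ≠ 0 ∧ b ≠ i)
        · by_cases hai : a = i
          · rw [dist_cast_one ((adj_ll a b).mpr (fun h => hba h.symm))]
            ring
          · rw [chi_neg hai]; ring
        · rw [chi_neg hbc]; ring
    · rw [zero_mul]
    · by_cases ha : (1 ≤ (a : ℕ) ∧ (a : ℕ) ≤ m)
      · by_cases hb0 : (b : ℕ) = 0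
        · rw [chi_neg (show ¬((b : ℕ) ≠ 0 ∧ b ≠ i) from fun h => h.1 hb0),
            dist_cast_one ((adj_rl a b).mpr (by rw [cross_iff]; exact Or.inl ⟨hb0, ha.2⟩))]
          ring
        · rw [chi_neg hb0]
          by_cases hbc : ((b : ℕ) ≠ 0 ∧ b ≠ i)
          · have hnadj : ¬ (glue n m).Adj (.inr a) (.inl b) := by
              rw [adj_rl, cross_iff]; omega
            have h1 : (glue n m).Adj (.inr a) (.inl (⟨0, Nat.pos_of_ne_zero (by omega)⟩ : Fin n)) := by
              rw [adj_rl, cross_iff]; left; exact ⟨rfl, ha.2⟩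
            have h2 : (glue n m).Adj (.inl (⟨0, Nat.pos_of_ne_zero (by omega)⟩ : Fin n)) (.inl b) := by
              rw [adj_ll]; simp [Fin.ext_iff]; omega
            rw [dist_cast_two (by omega) (by simp) hnadj h1 h2]
            ring
          · rw [chi_neg hbc]; ring
      · rw [chi_neg ha]; ring
    · by_cases hb0 : (b : ℕ) = 0
      · by_cases ha0 : (a : ℕ) = 0
        · have hab : a = b := Fin.ext (ha0.trans hb0.symm)
          rw [chi_neg (show ¬(1 ≤ (a : ℕ) ∧ (a : ℕ) ≤ m) from by omega), hab, dist_cast_zero]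
          ring
        · rw [chi_neg ha0,
            dist_cast_one ((adj_rr a b).mpr (fun h => ha0 (by rw [h]; exact hb0)))]
          ring
      · rw [chi_neg hb0]; ring
  rw [Finset.sum_congr rfl fun u _ => Finset.sum_congr rfl fun v _ => hpt u v,
    Fintype.sum_sum_type]
  have row1 : ∀ a : Fin n, (∑ v, B2 m i p q r (.inl a) v)
      = ((p / ((n : ℝ) - 2)) * ((n : ℝ) - 2)) * chi (a = i) := by
    intro a
    rw [Fintype.sum_sum_type]
    simp only [B2]
    rw [sum_coef_chi (sum_chi_ne0ne (by omega) i hi0), Finset.sum_const_zero]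
    ring
  have row2 : ∀ a : Fin n, (∑ v, B2 m i p q r (.inr a) v)
      = ((q / m) + (2 * r / m) * ((n : ℝ) - 2) + (q - p) / m)
          * chi (1 ≤ (a : ℕ) ∧ (a : ℕ) ≤ m) := by
    intro a
    rw [Fintype.sum_sum_type]
    simp only [B2]
    rw [Finset.sum_add_distrib, sum_coef_chi (sum_chi_val0 (by omega)),
      sum_coef_chi (sum_chi_ne0ne (by omega) i hi0), sum_coef_chi (sum_chi_val0 (by omega))]
    ring
  rw [Finset.sum_congr rfl fun a _ => row1 a, Finset.sum_congr rfl fun a _ => row2 a,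
    sum_coef_chi (sum_chi_eq i), sum_coef_chi (sum_chi_interval hmn)]
  subst hr; subst hq; subst hp
  field_simp
  ring

lemma f2_lip (hn : 5 ≤ n) (hm1 : 1 ≤ m) (i : Fin n) :
    ∀ u v : Fin n ⊕ Fin n, f2 i u - f2 i v ≤ ((glue n m).dist u v : ℝ) := by
  intro u v
  by_cases huv : u = v
  · subst huv; rw [dist_cast_zero]; simp
  · have hd1 : (1 : ℝ) ≤ ((glue n m).dist u v : ℝ) := by
      exact_mod_cast one_le_dist (by omega) huv
    rcases u with a | a <;> rcases v with b | b <;> simp only [f2]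
    · split_ifs <;> linarith
    · split_ifs <;> linarith
    · by_cases ha0 : (a : ℕ) = 0
      · rw [if_pos ha0]; split_ifs <;> linarith
      · rw [if_neg ha0]
        by_cases hb : ((b : ℕ) = 0 ∨ b = i)
        · rw [if_pos hb]; linarith
        · rw [if_neg hb]
          push_neg at hb
          have hb1 : (b : ℕ) ≠ 0 := hb.1
          have hd2 : (2 : ℝ) ≤ ((glue n m).dist (.inr a) (.inl b) : ℝ) := by
            exact_mod_cast two_le_dist (by omega) huv (by rw [adj_rl, cross_iff]; omega)
          linarith
    · split_ifs <;> linarith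

lemma f2_val (hn : 5 ≤ n) (hm1 : 1 ≤ m) (hmn : m < n) (i : Fin n)
    (hi1 : 1 ≤ (i : ℕ)) (hi2 : (i : ℕ) ≤ m) :
    ∑ u, f2 i u * OR.rw (glue n m) (.inl (⟨0, Nat.pos_of_ne_zero (by omega)⟩ : Fin n)) u
      - ∑ v, f2 i v * OR.rw (glue n m) (.inl i) v
      = 2 * m * ((n : ℝ) - 1) / ((n : ℝ) * ((n : ℝ) + m)) := by
  obtain ⟨hn0, hm0, hnm0, hn20⟩ := basic_facts hn hm1
  have hi0 : (i : ℕ) ≠ 0 := by omega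
  have e1 : ∀ a : Fin n, f2 i (.inl a) * OR.rw (glue n m) (.inl (⟨0, Nat.pos_of_ne_zero (by omega)⟩ : Fin n)) (.inl a)
      = ((n : ℝ) + m)⁻¹ * chi (a = i) := by
    intro a
    rw [rw_u0 hn hmn, chi_congr (adj_u0_l hn a)]
    simp only [f2]
    by_cases hai : a = i
    · subst hai; rw [if_pos (Or.inr rfl), chi_pos hi0, chi_pos rfl]; ring
    · rw [chi_neg hai]
      by_cases ha0 : (a : ℕ) = 0
      · rw [if_pos (Or.inl ha0), chi_neg (by omega : ¬(a : ℕ) ≠ 0)]; ring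
      · rw [if_neg (fun h => h.elim ha0 hai), chi_pos ha0]; ring
  have e2 : ∀ b : Fin n, f2 i (.inr b) * OR.rw (glue n m) (.inl (⟨0, Nat.pos_of_ne_zero (by omega)⟩ : Fin n)) (.inr b)
      = ((n : ℝ) + m)⁻¹ * chi ((b : ℕ) = 0)
        + (2 * ((n : ℝ) + m)⁻¹) * chi (1 ≤ (b : ℕ) ∧ (b : ℕ) ≤ m) := by
    intro b
    rw [rw_u0 hn hmn, chi_congr (adj_u0_r hn b)]
    simp only [f2]
    by_cases hb0 : (b : ℕ) = 0
    · rw [if_pos hb0, chi_pos (by omega : (b : ℕ) ≤ m), chi_pos hb0,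
        chi_neg (by omega : ¬(1 ≤ (b : ℕ) ∧ (b : ℕ) ≤ m))]
      ring
    · rw [if_neg hb0]
      by_cases hbm : (b : ℕ) ≤ m
      · rw [chi_pos hbm, chi_neg hb0, chi_pos ⟨by omega, hbm⟩]; ring
      · rw [chi_neg hbm, chi_neg hb0, chi_neg (fun h => hbm h.2)]; ring
  have e3 : ∀ b : Fin n, f2 i (.inl b) * OR.rw (glue n m) (.inl i) (.inl b)
      = ((n : ℝ))⁻¹ * chi ((b : ℕ) = 0) := by
    intro b
    rw [rw_ui hn hmn i hi1 hi2, chi_congr (adj_ui_l i b)]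
    simp only [f2]
    by_cases hb0 : (b : ℕ) = 0
    · rw [if_pos (Or.inl hb0), chi_pos (show b ≠ i from fun h => hi0 (h ▸ hb0)), chi_pos hb0]
      ring
    · rw [chi_neg hb0]
      by_cases hbi : b = i
      · rw [if_pos (Or.inr hbi), chi_neg (fun h : b ≠ i => h hbi)]; ring
      · rw [if_neg (fun h => h.elim hb0 hbi)]; ring
  have e4 : ∀ b : Fin n, f2 i (.inr b) * OR.rw (glue n m) (.inl i) (.inr b)
      = ((n : ℝ))⁻¹ * chi ((b : ℕ) = 0) := by
    intro b
    rw [rw_ui hn hmn i hi1 hi2, chi_congr (adj_ui_r i hi1 hi2 b)]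
    simp only [f2]
    by_cases hb0 : (b : ℕ) = 0
    · rw [if_pos hb0, chi_pos hb0]; ring
    · rw [if_neg hb0, chi_neg hb0]; ring
  rw [Fintype.sum_sum_type, Fintype.sum_sum_type,
    Finset.sum_congr rfl fun a _ => e1 a, Finset.sum_congr rfl fun b _ => e2 b,
    Finset.sum_congr rfl fun b _ => e3 b, Finset.sum_congr rfl fun b _ => e4 b,
    sum_coef_chi (sum_chi_eq i), Finset.sum_add_distrib,
    sum_coef_chi (sum_chi_val0 (by omega)), sum_coef_chi (sum_chi_interval hmn),
    sum_coef_chi (sum_chi_val0 (by omega))]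
  field_simp
  ring

lemma W_ge2 (hn : 5 ≤ n) (hm2 : 2 ≤ m) (hmn' : m ≤ n - 1) (i : Fin n)
    (hi1 : 1 ≤ (i : ℕ)) (hi2 : (i : ℕ) ≤ m) :
    OR.W (glue n m) (OR.rw (glue n m) (.inl (⟨0, Nat.pos_of_ne_zero (by omega)⟩ : Fin n)))
        (OR.rw (glue n m) (.inl i))
      = 2 * m * ((n : ℝ) - 1) / ((n : ℝ) * ((n : ℝ) + m)) := by
  have hm1 : 1 ≤ m := by omega
  have hmn : m < n := by omega
  obtain ⟨hn0, hm0, hnm0, hn20⟩ := basic_facts hn hm1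
  set p : ℝ := ((n : ℝ) + m)⁻¹ with hp
  set q : ℝ := ((n : ℝ))⁻¹ with hq
  set r : ℝ := q - p - p / ((n : ℝ) - 2) with hr
  have hp0 : 0 ≤ p := by rw [hp]; positivity
  have hq0 : 0 ≤ q := by rw [hq]; positivity
  have hqp : 0 ≤ q - p := by
    have : p ≤ q := by
      rw [hp, hq]
      apply inv_anti₀ hn0
      linarith
    linarith
  have hr0 : 0 ≤ r := by
    have hm2' : (2 : ℝ) ≤ (m : ℝ) := by exact_mod_cast hm2
    have hn5 : (5 : ℝ) ≤ (n : ℝ) := by exact_mod_cast hn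
    have hre : r = ((m : ℝ) * ((n : ℝ) - 2) - n) / ((n : ℝ) * ((n : ℝ) + m) * ((n : ℝ) - 2)) := by
      rw [hr, hp, hq]; field_simp; ring
    rw [hre]
    apply div_nonneg
    · nlinarith
    · positivity
  refine W_eq (glue n m) _ _ (A2 m i p q r) (f2 i) _
    ⟨?_, Set.toFinite _, A2_rows hn hm1 hmn i hi1 hi2 p q r hp hq hr,
      A2_cols hn hm1 hmn i hi1 hi2 p q r hp hq hr⟩
    (A2_cost hn hm1 hmn i hi1 hi2 p q r hp hq hr) (f2_lip hn hm1 i)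
    (f2_val hn hm1 hmn i hi1 hi2)
  rintro (a | a) (b | b) <;> simp only [A2]
  · exact add_nonneg (mul_nonneg (mul_nonneg (chi_nonneg _) hp0) (chi_nonneg _))
      (mul_nonneg (mul_nonneg (chi_nonneg _) (div_nonneg hp0 hn20.le)) (chi_nonneg _))
  · exact le_refl 0
  · exact add_nonneg (mul_nonneg (mul_nonneg (chi_nonneg _) (div_nonneg hq0 hm0.le)) (chi_nonneg _))
      (mul_nonneg (mul_nonneg (chi_nonneg _) (div_nonneg hr0 hm0.le)) (chi_nonneg _))
  · exact add_nonneg (mul_nonneg (mul_nonneg (chi_nonneg _) hp0) (chi_nonneg _))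
      (mul_nonneg (mul_nonneg (chi_nonneg _) (div_nonneg hqp hm0.le)) (chi_nonneg _))

/-- The optimal coupling for `m = 1`. -/
def A1 {n : ℕ} (i : Fin n) (p q s : ℝ) : Fin n ⊕ Fin n → Fin n ⊕ Fin n → ℝ
  | .inl a, .inl b => (chi ((a : ℕ) ≠ 0 ∧ a ≠ i) * p) * chi (b = a)
      + (chi (a = i) * (q - p)) * chi ((b : ℕ) ≠ 0 ∧ b ≠ i)
      + (chi (a = i) * s) * chi ((b : ℕ) = 0)
  | .inl _, .inr _ => 0
  | .inr a, .inl b => (chi (a = i) * (q - s)) * chi ((b : ℕ) = 0)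
  | .inr a, .inr b => (chi ((a : ℕ) = 0) * p) * chi ((b : ℕ) = 0)
      + (chi (a = i) * (q - p)) * chi ((b : ℕ) = 0)

/-- The coupling times distance for `m = 1`. -/
def B1 {n : ℕ} (i : Fin n) (p q s : ℝ) : Fin n ⊕ Fin n → Fin n ⊕ Fin n → ℝ
  | .inl a, .inl b => (chi (a = i) * (q - p)) * chi ((b : ℕ) ≠ 0 ∧ b ≠ i)
      + (chi (a = i) * s) * chi ((b : ℕ) = 0)
  | .inl _, .inr _ => 0
  | .inr a, .inl b => (chi (a = i) * (q - s)) * chi ((b : ℕ) = 0)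
  | .inr a, .inr b => (chi (a = i) * (q - p)) * chi ((b : ℕ) = 0)

/-- The Kantorovich potential for `m = 1`. -/
def f1 {n : ℕ} (i : Fin n) : Fin n ⊕ Fin n → ℝ
  | .inl a => if a = i then 1 else 0
  | .inr b => if b = i then 1 else 0

lemma A1_rows (hn : 5 ≤ n) (i : Fin n) (hi : (i : ℕ) = 1) (p q s : ℝ)
    (hp : p = ((n : ℝ) + 1)⁻¹) (hq : q = ((n : ℝ))⁻¹)
    (hs : s = p - ((n : ℝ) - 2) * (q - p)) (u : Fin n ⊕ Fin n) :
    ∑ᶠ v, A1 i p q s u v = OR.rw (glue n 1) (.inl (⟨0, Nat.pos_of_ne_zero (by omega)⟩ : Fin n)) u := by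
  have hn0 : (0:ℝ) < n := by exact_mod_cast (by omega : 0 < n)
  have hi0 : (i : ℕ) ≠ 0 := by omega
  subst hs; subst hq; subst hp
  rw [finsum_eq_sum_of_fintype, Fintype.sum_sum_type, rw_u0 hn (by omega)]
  rcases u with a | a
  · simp only [A1]
    rw [Finset.sum_add_distrib, Finset.sum_add_distrib, sum_coef_chi (sum_chi_eq a),
      sum_coef_chi (sum_chi_ne0ne (by omega) i hi0), sum_coef_chi (sum_chi_val0 (by omega)),
      Finset.sum_const_zero, chi_congr (adj_u0_l hn a)]
    by_cases hai : a = i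
    · subst hai
      rw [chi_neg (by simp : ¬((a : ℕ) ≠ 0 ∧ a ≠ a)), chi_pos rfl, chi_pos hi0]
      push_cast
      ring
    · rw [chi_neg hai, chi_congr (show ((a : ℕ) ≠ 0 ∧ a ≠ i) ↔ (a : ℕ) ≠ 0 from
        ⟨fun h => h.1, fun h => ⟨h, hai⟩⟩)]
      push_cast
      ring
  · simp only [A1]
    rw [Finset.sum_add_distrib, sum_coef_chi (sum_chi_val0 (by omega)),
      sum_coef_chi (sum_chi_val0 (by omega)), sum_coef_chi (sum_chi_val0 (by omega)),
      chi_congr (adj_u0_r hn a)]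
    by_cases ha0 : (a : ℕ) = 0
    · rw [chi_pos ha0, chi_neg (show a ≠ i from fun h => hi0 (by rw [← h, ha0])),
        chi_pos (by omega : (a : ℕ) ≤ 1)]
      push_cast
      ring
    · rw [chi_neg ha0]
      by_cases hai : a = i
      · rw [chi_pos hai, chi_pos (by omega : (a : ℕ) ≤ 1)]
        have h1 : (n:ℝ) ≠ 0 := ne_of_gt hn0
        have h2 : (n:ℝ) + 1 ≠ 0 := by positivity
        push_cast
        field_simp
        first
        | exact Or.inl (by ring)
        | exact Or.inl trivial
        | ring
      · rw [chi_neg hai, chi_neg (show ¬(a : ℕ) ≤ 1 from by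
          intro h
          exact hai (Fin.ext (by omega)))]
        ring

lemma A1_cols (hn : 5 ≤ n) (i : Fin n) (hi : (i : ℕ) = 1) (p q s : ℝ)
    (hp : p = ((n : ℝ) + 1)⁻¹) (hq : q = ((n : ℝ))⁻¹)
    (hs : s = p - ((n : ℝ) - 2) * (q - p)) (v : Fin n ⊕ Fin n) :
    ∑ᶠ u, A1 i p q s u v = OR.rw (glue n 1) (.inl i) v := by
  have hn0 : (0:ℝ) < n := by exact_mod_cast (by omega : 0 < n)
  have hi0 : (i : ℕ) ≠ 0 := by omega
  rw [finsum_eq_sum_of_fintype, Fintype.sum_sum_type, rw_ui hn (by omega) i (by omega) (by omega)]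
  rcases v with b | b
  · simp only [A1]
    rw [Finset.sum_add_distrib, Finset.sum_add_distrib,
      sum_delta (fun a => chi ((a : ℕ) ≠ 0 ∧ a ≠ i) * p) b,
      show (∑ a : Fin n, (chi (a = i) * (q - p)) * chi ((b : ℕ) ≠ 0 ∧ b ≠ i))
        = ∑ a : Fin n, ((q - p) * chi ((b : ℕ) ≠ 0 ∧ b ≠ i)) * chi (a = i)
        from Finset.sum_congr rfl fun a _ => by ring,
      sum_coef_chi (sum_chi_eq i),
      show (∑ a : Fin n, (chi (a = i) * s) * chi ((b : ℕ) = 0))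
        = ∑ a : Fin n, (s * chi ((b : ℕ) = 0)) * chi (a = i)
        from Finset.sum_congr rfl fun a _ => by ring,
      sum_coef_chi (sum_chi_eq i),
      show (∑ a : Fin n, (chi (a = i) * (q - s)) * chi ((b : ℕ) = 0))
        = ∑ a : Fin n, ((q - s) * chi ((b : ℕ) = 0)) * chi (a = i)
        from Finset.sum_congr rfl fun a _ => by ring,
      sum_coef_chi (sum_chi_eq i),
      chi_congr (adj_ui_l i b)]
    by_cases hb0 : (b : ℕ) = 0
    · rw [chi_neg (by omega : ¬((b : ℕ) ≠ 0 ∧ b ≠ i)), chi_pos hb0,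
        chi_pos (show b ≠ i from fun h => hi0 (by rw [← h, hb0]))]
      subst hs; subst hq; subst hp
      push_cast
      ring
    · by_cases hbi : b = i
      · rw [chi_neg (by simp [hbi] : ¬((b : ℕ) ≠ 0 ∧ b ≠ i)), chi_neg hb0,
          chi_neg (by simp [hbi])]
        ring
      · rw [chi_pos ⟨hb0, hbi⟩, chi_neg hb0, chi_pos hbi]
        subst hs; subst hq; subst hp
        push_cast
        ring
  · simp only [A1]
    rw [Finset.sum_const_zero, Finset.sum_add_distrib,
      show (∑ a : Fin n, (chi ((a : ℕ) = 0) * p) * chi ((b : ℕ) = 0))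
        = ∑ a : Fin n, (p * chi ((b : ℕ) = 0)) * chi ((a : ℕ) = 0)
        from Finset.sum_congr rfl fun a _ => by ring,
      sum_coef_chi (sum_chi_val0 (by omega)),
      show (∑ a : Fin n, (chi (a = i) * (q - p)) * chi ((b : ℕ) = 0))
        = ∑ a : Fin n, ((q - p) * chi ((b : ℕ) = 0)) * chi (a = i)
        from Finset.sum_congr rfl fun a _ => by ring,
      sum_coef_chi (sum_chi_eq i),
      chi_congr (adj_ui_r i (by omega) (by omega) b)]
    subst hs; subst hq; subst hp
    push_cast
    ring

lemma A1_cost (hn : 5 ≤ n) (i : Fin n) (hi : (i : ℕ) = 1) (p q s : ℝ)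
    (hp : p = ((n : ℝ) + 1)⁻¹) (hq : q = ((n : ℝ))⁻¹)
    (hs : s = p - ((n : ℝ) - 2) * (q - p)) :
    ∑ u, ∑ v, A1 i p q s u v * ((glue n 1).dist u v : ℝ) = 2 / ((n : ℝ) + 1) := by
  have hn0 : (0:ℝ) < n := by exact_mod_cast (by omega : 0 < n)
  have hi0 : (i : ℕ) ≠ 0 := by omega
  have hpt : ∀ u v, A1 i p q s u v * ((glue n 1).dist u v : ℝ) = B1 i p q s u v := by
    rintro (a | a) (b | b) <;> simp only [A1, B1]
    · by_cases hba : b = a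
      · subst hba
        rw [dist_cast_zero, mul_zero]
        by_cases hbi : b = i
        · rw [chi_neg (show ¬((b : ℕ) ≠ 0 ∧ b ≠ i) from fun h => h.2 hbi),
            chi_neg (show ¬(b : ℕ) = 0 from by rw [hbi]; omega)]
          ring
        · rw [chi_neg hbi]; ring
      · rw [chi_neg hba, dist_cast_one ((adj_ll a b).mpr (fun h => hba h.symm))]
        ring
    · rw [zero_mul]
    · by_cases hai : a = i
      · by_cases hb0 : (b : ℕ) = 0
        · rw [dist_cast_one ((adj_rl a b).mpr
            (by rw [cross_iff]; exact Or.inl ⟨hb0, by omega⟩))]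
          ring
        · rw [chi_neg hb0]; ring
      · rw [chi_neg hai]; ring
    · by_cases hb0 : (b : ℕ) = 0
      · by_cases ha0 : (a : ℕ) = 0
        · have hab : a = b := Fin.ext (ha0.trans hb0.symm)
          rw [chi_neg (show a ≠ i from fun h => hi0 (by rw [← h, ha0])), hab, dist_cast_zero]
          ring
        · rw [chi_neg ha0, dist_cast_one ((adj_rr a b).mpr (fun h => ha0 (by rw [h]; exact hb0)))]
          ring
      · rw [chi_neg hb0]; ring
  rw [Finset.sum_congr rfl fun u _ => Finset.sum_congr rfl fun v _ => hpt u v,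
    Fintype.sum_sum_type]
  have row1 : ∀ a : Fin n, (∑ v, B1 i p q s (.inl a) v)
      = ((q - p) * ((n : ℝ) - 2) + s) * chi (a = i) := by
    intro a
    rw [Fintype.sum_sum_type]
    simp only [B1]
    rw [Finset.sum_add_distrib, sum_coef_chi (sum_chi_ne0ne (by omega) i hi0),
      sum_coef_chi (sum_chi_val0 (by omega)), Finset.sum_const_zero]
    ring
  have row2 : ∀ a : Fin n, (∑ v, B1 i p q s (.inr a) v)
      = ((q - s) + (q - p)) * chi (a = i) := by
    intro a
    rw [Fintype.sum_sum_type]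
    simp only [B1]
    rw [sum_coef_chi (sum_chi_val0 (by omega)), sum_coef_chi (sum_chi_val0 (by omega))]
    ring
  rw [Finset.sum_congr rfl fun a _ => row1 a, Finset.sum_congr rfl fun a _ => row2 a,
    sum_coef_chi (sum_chi_eq i), sum_coef_chi (sum_chi_eq i)]
  subst hs; subst hq; subst hp
  have h1 : (n:ℝ) ≠ 0 := ne_of_gt hn0
  have h2 : (n:ℝ) + 1 ≠ 0 := by positivity
  field_simp
  ring

lemma f1_lip (hn : 5 ≤ n) (i : Fin n) :
    ∀ u v : Fin n ⊕ Fin n, f1 i u - f1 i v ≤ ((glue n 1).dist u v : ℝ) := by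
  intro u v
  by_cases huv : u = v
  · subst huv; rw [dist_cast_zero]; simp
  · have hd1 : (1 : ℝ) ≤ ((glue n 1).dist u v : ℝ) := by
      exact_mod_cast one_le_dist (by omega) huv
    rcases u with a | a <;> rcases v with b | b <;> simp only [f1] <;> split_ifs <;> linarith

lemma f1_val (hn : 5 ≤ n) (i : Fin n) (hi : (i : ℕ) = 1) :
    ∑ u, f1 i u * OR.rw (glue n 1) (.inl (⟨0, Nat.pos_of_ne_zero (by omega)⟩ : Fin n)) u
      - ∑ v, f1 i v * OR.rw (glue n 1) (.inl i) v = 2 / ((n : ℝ) + 1) := by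
  have hn0 : (0:ℝ) < n := by exact_mod_cast (by omega : 0 < n)
  have hi0 : (i : ℕ) ≠ 0 := by omega
  have e1 : ∀ a : Fin n, f1 i (.inl a) * OR.rw (glue n 1) (.inl (⟨0, Nat.pos_of_ne_zero (by omega)⟩ : Fin n)) (.inl a)
      = ((n : ℝ) + 1)⁻¹ * chi (a = i) := by
    intro a
    rw [rw_u0 hn (by omega), chi_congr (adj_u0_l hn a)]
    simp only [f1]
    by_cases hai : a = i
    · subst hai; rw [if_pos rfl, chi_pos hi0, chi_pos rfl]; push_cast; ring
    · rw [if_neg hai, chi_neg hai]; ring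
  have e2 : ∀ b : Fin n, f1 i (.inr b) * OR.rw (glue n 1) (.inl (⟨0, Nat.pos_of_ne_zero (by omega)⟩ : Fin n)) (.inr b)
      = ((n : ℝ) + 1)⁻¹ * chi (b = i) := by
    intro b
    rw [rw_u0 hn (by omega), chi_congr (adj_u0_r hn b)]
    simp only [f1]
    by_cases hbi : b = i
    · subst hbi; rw [if_pos rfl, chi_pos (by omega : (b : ℕ) ≤ 1), chi_pos rfl]; push_cast; ring
    · rw [if_neg hbi, chi_neg hbi]; ring
  have e3 : ∀ b : Fin n, f1 i (.inl b) * OR.rw (glue n 1) (.inl i) (.inl b) = 0 := by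
    intro b
    rw [rw_ui hn (by omega) i (by omega) (by omega), chi_congr (adj_ui_l i b)]
    simp only [f1]
    by_cases hbi : b = i
    · rw [if_pos hbi, chi_neg (fun h : b ≠ i => h hbi)]; ring
    · rw [if_neg hbi]; ring
  have e4 : ∀ b : Fin n, f1 i (.inr b) * OR.rw (glue n 1) (.inl i) (.inr b) = 0 := by
    intro b
    rw [rw_ui hn (by omega) i (by omega) (by omega), chi_congr (adj_ui_r i (by omega) (by omega) b)]
    simp only [f1]
    by_cases hbi : b = i
    · rw [if_pos hbi, chi_neg (show ¬(b : ℕ) = 0 from by rw [hbi]; omega)]; ring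
    · rw [if_neg hbi]; ring
  rw [Fintype.sum_sum_type, Fintype.sum_sum_type,
    Finset.sum_congr rfl fun a _ => e1 a, Finset.sum_congr rfl fun b _ => e2 b,
    Finset.sum_congr rfl fun b _ => e3 b, Finset.sum_congr rfl fun b _ => e4 b,
    sum_coef_chi (sum_chi_eq i), Finset.sum_const_zero]
  have h2 : (n:ℝ) + 1 ≠ 0 := by positivity
  field_simp
  ring

lemma W_eq1 (hn : 5 ≤ n) (i : Fin n) (hi : (i : ℕ) = 1) :
    OR.W (glue n 1) (OR.rw (glue n 1) (.inl (⟨0, Nat.pos_of_ne_zero (by omega)⟩ : Fin n)))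
        (OR.rw (glue n 1) (.inl i)) = 2 / ((n : ℝ) + 1) := by
  have hn0 : (0:ℝ) < n := by exact_mod_cast (by omega : 0 < n)
  have hn5 : (5:ℝ) ≤ (n:ℝ) := by exact_mod_cast hn
  set p : ℝ := ((n : ℝ) + 1)⁻¹ with hp
  set q : ℝ := ((n : ℝ))⁻¹ with hq
  set s : ℝ := p - ((n : ℝ) - 2) * (q - p) with hs
  have h1 : (n:ℝ) ≠ 0 := ne_of_gt hn0
  have h2 : (n:ℝ) + 1 ≠ 0 := by positivity
  have hp0 : 0 ≤ p := by rw [hp]; positivity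
  have hqp : 0 ≤ q - p := by
    have : p ≤ q := by
      rw [hp, hq]
      exact inv_anti₀ hn0 (by linarith)
    linarith
  have hs0 : 0 ≤ s := by
    have hse : s = 2 / ((n : ℝ) * ((n : ℝ) + 1)) := by
      rw [hs, hp, hq]; field_simp; try ring
    rw [hse]; positivity
  have hqs : 0 ≤ q - s := by
    have hse : q - s = ((n : ℝ) - 1) / ((n : ℝ) * ((n : ℝ) + 1)) := by
      rw [hs, hp, hq]; field_simp; try ring
    rw [hse]
    apply div_nonneg (by linarith) (by positivity)
  refine W_eq (glue n 1) _ _ (A1 i p q s) (f1 i) _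
    ⟨?_, Set.toFinite _, A1_rows hn i hi p q s hp hq hs, A1_cols hn i hi p q s hp hq hs⟩
    (A1_cost hn i hi p q s hp hq hs) (f1_lip hn i) (f1_val hn i hi)
  rintro (a | a) (b | b) <;> simp only [A1]
  · exact add_nonneg (add_nonneg
      (mul_nonneg (mul_nonneg (chi_nonneg _) hp0) (chi_nonneg _))
      (mul_nonneg (mul_nonneg (chi_nonneg _) hqp) (chi_nonneg _)))
      (mul_nonneg (mul_nonneg (chi_nonneg _) hs0) (chi_nonneg _))
  · exact le_refl 0
  · exact mul_nonneg (mul_nonneg (chi_nonneg _) hqs) (chi_nonneg _)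
  · exact add_nonneg (mul_nonneg (mul_nonneg (chi_nonneg _) hp0) (chi_nonneg _))
      (mul_nonneg (mul_nonneg (chi_nonneg _) hqp) (chi_nonneg _))

end GlueAux

theorem glue_ricci_u0_to_gamma (n m : ℕ) (hn : 5 ≤ n) (hm : 1 ≤ m) (hm' : m ≤ n - 1) :
    (2 ≤ m → ∀ u : Fin n, 1 ≤ (u : ℕ) → (u : ℕ) ≤ m →
      OR.ricci (OR.glue n m) (Sum.inl (⟨0, by omega⟩ : Fin n)) (Sum.inl u)
        = ((n : ℝ) ^ 2 - m * n + 2 * m) / ((n : ℝ) * (n + m))) ∧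
    (m = 1 → ∀ u : Fin n, (u : ℕ) = 1 →
      OR.ricci (OR.glue n m) (Sum.inl (⟨0, by omega⟩ : Fin n)) (Sum.inl u)
        = ((n : ℝ) - 1) / ((n : ℝ) + 1)) := by
  have hn0 : (0:ℝ) < n := by exact_mod_cast (by omega : 0 < n)
  have hm0 : (0:ℝ) < m := by exact_mod_cast hm
  constructor
  · intro hm2 u hu1 hu2
    have hadj : (OR.glue n m).Adj (Sum.inl (⟨0, by omega⟩ : Fin n)) (Sum.inl u) := by
      rw [GlueAux.adj_ll]
      simp only [ne_eq, Fin.ext_iff]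
      omega
    have hW := GlueAux.W_ge2 hn hm2 hm' u hu1 hu2
    unfold OR.ricci
    rw [hW, GlueAux.dist_eq_one hadj]
    have h1 : (n:ℝ) ≠ 0 := ne_of_gt hn0
    have h2 : (n:ℝ) + m ≠ 0 := by positivity
    push_cast
    field_simp
    ring
  · intro hm1 u hu
    subst hm1
    have hadj : (OR.glue n 1).Adj (Sum.inl (⟨0, by omega⟩ : Fin n)) (Sum.inl u) := by
      rw [GlueAux.adj_ll]
      simp only [ne_eq, Fin.ext_iff]
      omega
    have hW := GlueAux.W_eq1 hn u hu
    unfold OR.ricci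
    rw [hW, GlueAux.dist_eq_one hadj]
    have h2 : (n:ℝ) + 1 ≠ 0 := by positivity
    push_cast
    field_simp
    ring
end
end
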